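/- arXiv:2504.03113 — 7 statements merged into one kernel-verified Lean document; each statement's English description precedes it below -/
import Mathlib

section
/- The family of elements u₁u₂⋯u_k t_w of ev₀(H⁺), indexed without repetition by pairs (u, w) where u assigns to each i ≥ 1 a finite word u_i in the two letters {x_i, y_i} with u_i empty for all but finitely many i, and w is a permutation of {1,2,…} moving only finitely many points, is a ℚ-vector-space basis of ev₀(H⁺). -/
/-!
The stable limit DAHA at `h = 0`, `ev₀(H⁺)`, over `ℚ`.
Generator index `i : ℕ` represents the paper's index `i + 1 ≥ 1`.
-/

noncomputable section

/-- Generators of `ev₀(H⁺)`; index `i : ℕ` stands for the paper index `i + 1`. -/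
inductive EGen : Type
  | t : ℕ → EGen
  | x : ℕ → EGen
  | y : ℕ → EGen

open FreeAlgebra in
/-- The defining relations of `ev₀(H⁺)`. -/
inductive ERel : FreeAlgebra ℚ EGen → FreeAlgebra ℚ EGen → Prop
  | tt (i : ℕ) : ERel (ι ℚ (EGen.t i) * ι ℚ (EGen.t i)) 1
  | tcomm (i j : ℕ) (hij : i + 1 < j ∨ j + 1 < i) :
      ERel (ι ℚ (EGen.t i) * ι ℚ (EGen.t j)) (ι ℚ (EGen.t j) * ι ℚ (EGen.t i))
  | braid (i : ℕ) :
      ERel (ι ℚ (EGen.t i) * ι ℚ (EGen.t (i + 1)) * ι ℚ (EGen.t i))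
        (ι ℚ (EGen.t (i + 1)) * ι ℚ (EGen.t i) * ι ℚ (EGen.t (i + 1)))
  | txt (i : ℕ) :
      ERel (ι ℚ (EGen.t i) * ι ℚ (EGen.x i) * ι ℚ (EGen.t i)) (ι ℚ (EGen.x (i + 1)))
  | tx (i j : ℕ) (h1 : j ≠ i) (h2 : j ≠ i + 1) :
      ERel (ι ℚ (EGen.t i) * ι ℚ (EGen.x j)) (ι ℚ (EGen.x j) * ι ℚ (EGen.t i))
  | xx (i j : ℕ) :
      ERel (ι ℚ (EGen.x i) * ι ℚ (EGen.x j)) (ι ℚ (EGen.x j) * ι ℚ (EGen.x i))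
  | tyt (i : ℕ) :
      ERel (ι ℚ (EGen.t i) * ι ℚ (EGen.y i) * ι ℚ (EGen.t i)) (ι ℚ (EGen.y (i + 1)))
  | ty (i j : ℕ) (h1 : j ≠ i) (h2 : j ≠ i + 1) :
      ERel (ι ℚ (EGen.t i) * ι ℚ (EGen.y j)) (ι ℚ (EGen.y j) * ι ℚ (EGen.t i))
  | yy (i j : ℕ) :
      ERel (ι ℚ (EGen.y i) * ι ℚ (EGen.y j)) (ι ℚ (EGen.y j) * ι ℚ (EGen.y i))
  | cross :
      ERel (ι ℚ (EGen.y 0) * ι ℚ (EGen.t 0) * ι ℚ (EGen.x 0))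
        (ι ℚ (EGen.x 1) * ι ℚ (EGen.y 0) * ι ℚ (EGen.t 0))

/-- The stable limit DAHA at `h = 0`. -/
abbrev Ev0H : Type := RingQuot ERel

/-- The image in `ev₀(H⁺)` of a generator. -/
def egen (g : EGen) : Ev0H := RingQuot.mkAlgHom ℚ ERel (FreeAlgebra.ι ℚ g)

/-- A letter of the two-letter alphabet `{x_i, y_i}`: `true ↦ x_i`, `false ↦ y_i`. -/
def eletterElem (i : ℕ) (b : Bool) : Ev0H := if b then egen (EGen.x i) else egen (EGen.y i)

/-- The element of `ev₀(H⁺)` corresponding to a word `u` in the alphabet `{x_i, y_i}`. -/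
def ewordElem (i : ℕ) (u : List Bool) : Ev0H := (u.map (eletterElem i)).prod

/-- Permutations of `{1, 2, …}` (realized as `ℕ`) moving only finitely many points. -/
def FinPerm : Type := {w : Equiv.Perm ℕ // {i | w i ≠ i}.Finite}

/-- The adjacent transposition `s_i = (i, i+1)`. -/
def swapAdj (i : ℕ) : Equiv.Perm ℕ := Equiv.swap i (i + 1)

/-- The permutation `s_{i₁} ⋯ s_{i_ℓ}` represented by a list of indices. -/
def wordPerm (l : List ℕ) : Equiv.Perm ℕ := (l.map swapAdj).prod

/-- The element `t_{i₁} ⋯ t_{i_ℓ}` of `ev₀(H⁺)` attached to a list of indices. -/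
def tword (l : List ℕ) : Ev0H := (l.map (fun i => egen (EGen.t i))).prod

instance : Zero (List Bool) := ⟨[]⟩

/-- The ordered product `u₁ u₂ ⋯ u_k` in `ev₀(H⁺)`. -/
def uProd (u : ℕ →₀ List Bool) (k : ℕ) : Ev0H :=
  ((List.range k).map (fun i => ewordElem i (u i))).prod

/-- The element `u₁ u₂ ⋯ u_k t_w` of `ev₀(H⁺)` attached to the pair `(u, w)`, where `t_w` is
taken along the chosen expression `rep w` of `w` as a product of adjacent transpositions. -/
def stdWord0 (rep : FinPerm → List ℕ) (u : ℕ →₀ List Bool) (w : FinPerm) : Ev0H :=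
  uProd u (u.support.sup id + 1) * tword (rep w)

/-!
Spanning is a straightening argument: left multiplication by a generator sends a standard word
`u₁ ⋯ u_k t_w` to another one. For `x_i`, `y_i` this uses that letters with different indices
commute; `x_i y_j = y_j x_i` follows from the cross relation (which gives `x₂ y₁ = y₁ x₂`) by
conjugating with the `t`'s, whose action on indices is transitive on pairs of distinct indices.
For `t_i` it uses that `t_w` depends only on `w`, i.e. that the `t_i` satisfy the Coxeter
presentation of `S_∞`; this is proved with normal forms built from the coset decompositions
of `S_{n+1}` modulo `S_n`.

Linear independence comes from a representation of `ev₀(H⁺)` on the ℚ-vector space with basis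
the pairs `(u, w)` of a word-valued function and a permutation: `x_i` and `y_i` prepend a letter
to `u_i` and `t_i` permutes the indices of `u` and multiplies `w` by `s_i`. The standard word
indexed by `(u, w)` sends the basis vector `(∅, 1)` to `(u, w)`.
-/

theorem swapAdj_apply_self (i : ℕ) : swapAdj i i = i + 1 := Equiv.swap_apply_left _ _

theorem swapAdj_apply_add_one (i : ℕ) : swapAdj i (i + 1) = i := Equiv.swap_apply_right _ _

theorem swapAdj_apply_of_ne {i m : ℕ} (h₁ : m ≠ i) (h₂ : m ≠ i + 1) : swapAdj i m = m :=
  Equiv.swap_apply_of_ne_of_ne h₁ h₂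

theorem swapAdj_apply_lt_iff {i K m : ℕ} (hK : i + 2 ≤ K) : swapAdj i m < K ↔ m < K := by
  unfold swapAdj
  rw [Equiv.swap_apply_def]
  split_ifs <;> omega

theorem prod_map_swapAdj_apply_of_lt {l : List ℕ} {k : ℕ} (h : ∀ m ∈ l, m + 1 < k) :
    (l.map swapAdj).prod k = k := by
  induction l with
  | nil => rfl
  | cons m l ih =>
    have hm := h m List.mem_cons_self
    rw [List.map_cons, List.prod_cons, Equiv.Perm.mul_apply,
      ih fun m' hm' => h m' (List.mem_cons_of_mem _ hm'),
      swapAdj_apply_of_ne (by omega) (by omega)]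

namespace TypeA

variable {M : Type*} [Monoid M]

structure Relations (f : ℕ → M) : Prop where
  mul_self : ∀ i, f i * f i = 1
  commute : ∀ i j, i + 2 ≤ j → Commute (f i) (f j)
  braid : ∀ i, f i * f (i + 1) * f i = f (i + 1) * f i * f (i + 1)

theorem swapAdj_relations : Relations swapAdj where
  mul_self i := Equiv.swap_mul_self i (i + 1)
  commute i j h := by
    ext x
    simp only [Equiv.Perm.mul_apply, swapAdj, Equiv.swap_apply_def]
    split_ifs <;> omega
  braid i := by
    ext x
    simp only [Equiv.Perm.mul_apply, swapAdj, Equiv.swap_apply_def]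
    split_ifs <;> omega

def ascProd (f : ℕ → M) (a n : ℕ) : M := ((List.range' a (n - a)).map f).prod

variable {f : ℕ → M}

theorem ascProd_of_le {a n : ℕ} (h : n ≤ a) : ascProd f a n = 1 := by
  simp [ascProd, Nat.sub_eq_zero_of_le h]

theorem ascProd_mul_ascProd {a b n : ℕ} (hab : a ≤ b) (hbn : b ≤ n) :
    ascProd f a b * ascProd f b n = ascProd f a n := by
  have h := List.range'_append (s := a) (m := b - a) (n := n - b) (step := 1)
  rw [show a + 1 * (b - a) = b by omega, show b - a + (n - b) = n - a by omega] at h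
  rw [ascProd, ascProd, ascProd, ← h, List.map_append, List.prod_append]

theorem ascProd_eq_mul {a n : ℕ} (h : a < n) : ascProd f a n = f a * ascProd f (a + 1) n := by
  rw [← ascProd_mul_ascProd (Nat.le_succ a) h]
  simp [ascProd]

theorem ascProd_swapAdj_apply_self {a n : ℕ} (h : a ≤ n) : ascProd swapAdj a n n = a := by
  induction h using Nat.decreasingInduction with
  | self => rw [ascProd_of_le le_rfl, Equiv.Perm.one_apply]
  | of_succ a ha ih => rw [ascProd_eq_mul ha, Equiv.Perm.mul_apply, ih, swapAdj_apply_add_one]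

theorem Relations.commute_ascProd (hf : Relations f) {i a n : ℕ} (h : i + 2 ≤ a ∨ n + 1 ≤ i) :
    Commute (f i) (ascProd f a n) := by
  refine Commute.list_prod_right _ _ fun x hx => ?_
  obtain ⟨k, hk, rfl⟩ := List.mem_map.mp hx
  rw [List.mem_range'_1] at hk
  rcases h with h | h
  · exact hf.commute i k (by omega)
  · exact (hf.commute k i (by omega)).symm

theorem Relations.mul_ascProd_of_le (hf : Relations f) {k a n : ℕ} (ha : a ≤ k)
    (hn : k + 2 ≤ n) : f (k + 1) * ascProd f a n = ascProd f a n * f k := by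
  have hsplit : ascProd f a n = ascProd f a k * (f k * f (k + 1) * ascProd f (k + 2) n) := by
    rw [← ascProd_mul_ascProd ha (by omega), ascProd_eq_mul (a := k) (by omega),
      ascProd_eq_mul (a := k + 1) (by omega), mul_assoc (f k)]
  rw [hsplit]
  calc _ = ascProd f a k * (f (k + 1) * f k * f (k + 1) * ascProd f (k + 2) n) := by
        rw [← mul_assoc, (hf.commute_ascProd (Or.inr le_rfl)).eq]; simp only [mul_assoc]
    _ = ascProd f a k * (f k * f (k + 1) * (f k * ascProd f (k + 2) n)) := by
        rw [← hf.braid]; simp only [mul_assoc]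
    _ = _ := by rw [(hf.commute_ascProd (Or.inl le_rfl)).eq]; simp only [mul_assoc]

/-- The index of the generator `r` (or `none` for `r = 1`) such that
`s_i (s_a ⋯ s_{n-1}) = (s_{s_i a} ⋯ s_{n-1}) r`. -/
def cosetResidual (i a : ℕ) : Option ℕ :=
  if i + 2 ≤ a then some i else if a < i then some (i - 1) else none

theorem cosetResidual_add_two_le {i a n j : ℕ} (ha : a ≤ n) (hi : i < n)
    (h : cosetResidual i a = some j) : j + 2 ≤ n := by
  unfold cosetResidual at h
  split_ifs at h <;> cases h <;> omega

theorem Relations.mul_ascProd (hf : Relations f) {i a n : ℕ} (ha : a ≤ n) (hi : i < n) :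
    f i * ascProd f a n = ascProd f (swapAdj i a) n * (cosetResidual i a).elim 1 f := by
  unfold cosetResidual
  split_ifs with h₁ h₂
  · rw [swapAdj_apply_of_ne (by omega) (by omega)]
    exact (hf.commute_ascProd (Or.inl h₁)).eq
  · obtain ⟨k, rfl⟩ : ∃ k, i = k + 1 := ⟨i - 1, by omega⟩
    rw [swapAdj_apply_of_ne (by omega) (by omega)]
    exact hf.mul_ascProd_of_le (by omega) (by omega)
  · rw [Option.elim_none, mul_one]
    obtain rfl | rfl : a = i + 1 ∨ a = i := by omega
    · rw [swapAdj_apply_add_one, ← ascProd_eq_mul hi]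
    · rw [swapAdj_apply_self, ascProd_eq_mul hi, ← mul_assoc, hf.mul_self, one_mul]

/-- The normal form attached to the coset decompositions `S_{n+1} = ⋃ₐ cₐ S_n`, where
`cₐ = s_a s_{a+1} ⋯ s_{n-1}` is the coset representative sending `n` to `a`. -/
def normalForm (f : ℕ → M) : ℕ → Equiv.Perm ℕ → M
  | 0, _ => 1
  | n + 1, w => ascProd f (w n) n * normalForm f n ((ascProd swapAdj (w n) n)⁻¹ * w)

theorem normalForm_one (n : ℕ) : normalForm f n 1 = 1 := by
  induction n with
  | zero => rfl
  | succ n ih =>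
    simp only [normalForm, Equiv.Perm.one_apply, ascProd_of_le le_rfl, inv_one, mul_one, ih]

theorem apply_le_of_fixes_ge {n : ℕ} {w : Equiv.Perm ℕ} (hw : ∀ k, n + 1 ≤ k → w k = k) :
    w n ≤ n := by
  by_contra h
  have := w.injective (hw (w n) (by omega))
  omega

theorem fixes_ge_ascProd_inv_mul {n : ℕ} {w : Equiv.Perm ℕ} (hw : ∀ k, n + 1 ≤ k → w k = k) :
    ∀ k, n ≤ k → ((ascProd swapAdj (w n) n)⁻¹ * w) k = k := by
  intro k hk
  rw [Equiv.Perm.mul_apply, Equiv.Perm.inv_eq_iff_eq]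
  rcases hk.eq_or_lt with rfl | hk
  · exact (ascProd_swapAdj_apply_self (apply_le_of_fixes_ge hw)).symm
  · rw [hw k hk]
    refine (prod_map_swapAdj_apply_of_lt fun m hm => ?_).symm
    rw [List.mem_range'_1] at hm
    omega

theorem Relations.mul_normalForm (hf : Relations f) {n : ℕ} {w : Equiv.Perm ℕ}
    (hw : ∀ k, n ≤ k → w k = k) {i : ℕ} (hi : i + 2 ≤ n) :
    f i * normalForm f n w = normalForm f n (swapAdj i * w) := by
  induction n generalizing w i with
  | zero => omega
  | succ n ih =>
    have ha := apply_le_of_fixes_ge hw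
    have hperm := swapAdj_relations.mul_ascProd ha (i := i) (by omega)
    have hcoset : (ascProd swapAdj (swapAdj i (w n)) n)⁻¹ * (swapAdj i * w)
        = (cosetResidual i (w n)).elim 1 swapAdj * ((ascProd swapAdj (w n) n)⁻¹ * w) := by
      rw [← mul_assoc, ← mul_assoc]
      congr 1
      rw [inv_mul_eq_iff_eq_mul, ← mul_assoc, ← hperm, mul_inv_cancel_right]
    rw [normalForm, normalForm, Equiv.Perm.mul_apply, ← mul_assoc, hf.mul_ascProd ha (by omega),
      mul_assoc, hcoset]
    congr 1
    cases hr : cosetResidual i (w n) with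
    | none => simp
    | some j =>
      exact ih (fixes_ge_ascProd_inv_mul hw) (cosetResidual_add_two_le ha (by omega) hr)

theorem Relations.prod_eq_normalForm (hf : Relations f) {n : ℕ} {l : List ℕ}
    (hl : ∀ i ∈ l, i + 2 ≤ n) : (l.map f).prod = normalForm f n (wordPerm l) := by
  induction l with
  | nil => exact (normalForm_one n).symm
  | cons i l ih =>
    have hl' : ∀ j ∈ l, j + 2 ≤ n := fun j hj => hl j (List.mem_cons_of_mem _ hj)
    rw [List.map_cons, List.prod_cons, ih hl', hf.mul_normalForm _ (hl i List.mem_cons_self)]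
    · rfl
    · exact fun k hk => prod_map_swapAdj_apply_of_lt fun m hm => by have := hl' m hm; omega

theorem Relations.prod_eq_of_wordPerm_eq (hf : Relations f) {l l' : List ℕ}
    (h : wordPerm l = wordPerm l') : (l.map f).prod = (l'.map f).prod := by
  have hle : ∀ i ∈ l ++ l', i + 2 ≤ (l ++ l').sum + 2 := fun i hi => by
    have := List.le_sum_of_mem hi; omega
  rw [hf.prod_eq_normalForm fun i hi => hle i (List.mem_append_left _ hi),
    hf.prod_eq_normalForm fun i hi => hle i (List.mem_append_right _ hi), h]

end TypeA

theorem SemiconjBy.list_prod_map {M ι : Type*} [Monoid M] {a : M} {g g' : ι → M} {l : List ι}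
    (h : ∀ j ∈ l, SemiconjBy a (g j) (g' j)) : SemiconjBy a (l.map g).prod (l.map g').prod := by
  induction l with
  | nil => exact SemiconjBy.one_right a
  | cons j l ih =>
    simpa using
      (h j List.mem_cons_self).mul_right (ih fun k hk => h k (List.mem_cons_of_mem _ hk))

theorem semiconjBy_swapAdj {M : Type*} [Monoid M] {t z : ℕ → M} (htt : ∀ i, t i * t i = 1)
    (hconj : ∀ i, t i * z i * t i = z (i + 1))
    (hcomm : ∀ i j, j ≠ i → j ≠ i + 1 → t i * z j = z j * t i) (i j : ℕ) :
    SemiconjBy (t i) (z j) (z (swapAdj i j)) := by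
  unfold SemiconjBy
  rcases eq_or_ne j i with rfl | h₁
  · rw [swapAdj_apply_self, ← hconj, mul_assoc _ (t j), htt, mul_one]
  rcases eq_or_ne j (i + 1) with rfl | h₂
  · rw [swapAdj_apply_add_one, ← hconj, ← mul_assoc, ← mul_assoc, htt, one_mul]
  · rw [swapAdj_apply_of_ne h₁ h₂, hcomm i j h₁ h₂]

theorem Commute.of_semiconjBy {M : Type*} [Monoid M] {t a b a' b' : M} (htt : t * t = 1)
    (ha : SemiconjBy t a a') (hb : SemiconjBy t b b') (h : Commute a b) : Commute a' b' := by
  have conj {c c' : M} (hc : SemiconjBy t c c') : c' = t * c * t := by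
    rw [hc.eq, mul_assoc, htt, mul_one]
  rw [conj ha, conj hb]
  unfold Commute SemiconjBy
  simp only [mul_assoc]
  rw [← mul_assoc t t (b * t), ← mul_assoc t t (a * t), htt, one_mul, one_mul, ← mul_assoc a b,
    h.eq, mul_assoc]

theorem forall_ne_of_swapAdj_invariant {R : ℕ → ℕ → Prop} (h₁₀ : R 1 0)
    (hs : ∀ k i j, R i j → R (swapAdj k i) (swapAdj k j)) {i j : ℕ} (hij : i ≠ j) : R i j := by
  have hgt : ∀ j i, j < i → R i j := by
    intro j
    induction j with
    | zero =>
      intro i hi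
      induction i, hi using Nat.le_induction with
      | base => exact h₁₀
      | succ i hi ih =>
        simpa [swapAdj_apply_self, swapAdj_apply_of_ne (m := 0) (i := i) (by omega) (by omega)]
          using hs i i 0 ih
    | succ j ih =>
      intro i hi
      simpa [swapAdj_apply_self, swapAdj_apply_of_ne (m := i) (i := j) (by omega) (by omega)]
        using hs j i j (ih i (by omega))
  have hlt : ∀ i j, i < j → R i j := by
    intro i
    induction i with
    | zero =>
      intro j hj
      induction j, hj using Nat.le_induction with
      | base => simpa [swapAdj_apply_self, swapAdj_apply_add_one] using hs 0 1 0 h₁₀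
      | succ j hj ih =>
        simpa [swapAdj_apply_self, swapAdj_apply_of_ne (m := 0) (i := j) (by omega) (by omega)]
          using hs j 0 j ih
    | succ i ih =>
      intro j hj
      simpa [swapAdj_apply_self, swapAdj_apply_of_ne (m := j) (i := i) (by omega) (by omega)]
        using hs i i j (ih j (by omega))
  rcases lt_or_gt_of_ne hij with h | h
  · exact hlt i j h
  · exact hgt j i h

def FinPerm.one : FinPerm := ⟨1, by simp⟩

def FinPerm.swapAdjMul (i : ℕ) (w : FinPerm) : FinPerm :=
  ⟨swapAdj i * w.1, (w.2.union (Set.toFinite {i, i + 1})).subset fun k hk => by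
    by_contra h
    simp only [Set.mem_union, Set.mem_ofPred_eq, Set.mem_insert_iff, Set.mem_singleton_iff,
      not_or, not_not] at h
    obtain ⟨hw, h₁, h₂⟩ := h
    exact hk (by rw [Equiv.Perm.mul_apply, hw, swapAdj_apply_of_ne h₁ h₂])⟩

theorem Finsupp.exists_forall_le_eq_zero {M : Type*} [Zero M] (u : ℕ →₀ M) (N : ℕ) :
    ∃ K, N ≤ K ∧ ∀ m, K ≤ m → u m = 0 := by
  obtain ⟨n, hn⟩ := u.support.exists_nat_subset_range
  refine ⟨max N n, le_max_left _ _, fun m hm => Finsupp.notMem_support_iff.mp fun hmem => ?_⟩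
  have := Finset.mem_range.mp (hn hmem)
  omega

namespace Ev0H

theorem mkAlgHom_ι (g : EGen) : RingQuot.mkAlgHom ℚ ERel (FreeAlgebra.ι ℚ g) = egen g := rfl

theorem t_relations : TypeA.Relations fun i => egen (.t i) where
  mul_self i := by
    simpa only [map_mul, map_one, mkAlgHom_ι] using RingQuot.mkAlgHom_rel ℚ (ERel.tt i)
  commute i j h := by
    simpa only [map_mul, mkAlgHom_ι, commute_iff_eq] using
      RingQuot.mkAlgHom_rel ℚ (ERel.tcomm i j (Or.inl (by omega)))
  braid i := by simpa only [map_mul, mkAlgHom_ι] using RingQuot.mkAlgHom_rel ℚ (ERel.braid i)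

theorem tword_eq_of_wordPerm_eq {l l' : List ℕ} (h : wordPerm l = wordPerm l') :
    tword l = tword l' :=
  t_relations.prod_eq_of_wordPerm_eq h

theorem semiconjBy_t_eletterElem (i j : ℕ) (b : Bool) :
    SemiconjBy (egen (.t i)) (eletterElem j b) (eletterElem (swapAdj i j) b) := by
  cases b
  · refine semiconjBy_swapAdj (z := fun j => egen (.y j)) t_relations.mul_self (fun i => ?_)
      (fun i j h₁ h₂ => ?_) i j
    · simpa only [map_mul, mkAlgHom_ι] using RingQuot.mkAlgHom_rel ℚ (ERel.tyt i)
    · simpa only [map_mul, mkAlgHom_ι] using RingQuot.mkAlgHom_rel ℚ (ERel.ty i j h₁ h₂)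
  · refine semiconjBy_swapAdj (z := fun j => egen (.x j)) t_relations.mul_self (fun i => ?_)
      (fun i j h₁ h₂ => ?_) i j
    · simpa only [map_mul, mkAlgHom_ι] using RingQuot.mkAlgHom_rel ℚ (ERel.txt i)
    · simpa only [map_mul, mkAlgHom_ι] using RingQuot.mkAlgHom_rel ℚ (ERel.tx i j h₁ h₂)

theorem commute_x_y {i j : ℕ} (h : i ≠ j) : Commute (egen (.x i)) (egen (.y j)) := by
  refine forall_ne_of_swapAdj_invariant (R := fun i j => Commute (egen (.x i)) (egen (.y j)))
    ?_ (fun k i j hij => ?_) h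
  · have hcross :
        egen (.y 0) * egen (.t 0) * egen (.x 0) = egen (.x 1) * egen (.y 0) * egen (.t 0) := by
      simpa only [map_mul, mkAlgHom_ι] using RingQuot.mkAlgHom_rel ℚ ERel.cross
    have hx : egen (.t 0) * egen (.x 0) = egen (.x 1) * egen (.t 0) :=
      semiconjBy_t_eletterElem 0 0 true
    rw [mul_assoc, hx, ← mul_assoc] at hcross
    calc egen (.x 1) * egen (.y 0)
        = egen (.x 1) * egen (.y 0) * egen (.t 0) * egen (.t 0) := by
          rw [mul_assoc _ (egen (.t 0)), t_relations.mul_self, mul_one]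
      _ = egen (.y 0) * egen (.x 1) := by
          rw [← hcross, mul_assoc _ (egen (.t 0)), t_relations.mul_self, mul_one]
  · exact Commute.of_semiconjBy (t_relations.mul_self k) (semiconjBy_t_eletterElem k i true)
      (semiconjBy_t_eletterElem k j false) hij

theorem commute_eletterElem {i j : ℕ} (h : i ≠ j) (b b' : Bool) :
    Commute (eletterElem i b) (eletterElem j b') := by
  cases b <;> cases b' <;> simp only [eletterElem, Bool.false_eq_true, if_true, if_false]
  · simpa only [map_mul, mkAlgHom_ι, commute_iff_eq] using RingQuot.mkAlgHom_rel ℚ (ERel.yy i j)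
  · exact (commute_x_y h.symm).symm
  · exact commute_x_y h
  · simpa only [map_mul, mkAlgHom_ι, commute_iff_eq] using RingQuot.mkAlgHom_rel ℚ (ERel.xx i j)

theorem commute_eletterElem_ewordElem {i j : ℕ} (h : i ≠ j) (b : Bool) (v : List Bool) :
    Commute (eletterElem i b) (ewordElem j v) :=
  Commute.list_prod_right _ _ fun _ hx => by
    obtain ⟨b', -, rfl⟩ := List.mem_map.mp hx
    exact commute_eletterElem h b b'

theorem commute_ewordElem {i j : ℕ} (h : i ≠ j) (v v' : List Bool) :
    Commute (ewordElem i v) (ewordElem j v') :=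
  Commute.list_prod_left _ _ fun _ hx => by
    obtain ⟨b, -, rfl⟩ := List.mem_map.mp hx
    exact commute_eletterElem_ewordElem h b v'

theorem ewordElem_cons (i : ℕ) (b : Bool) (v : List Bool) :
    ewordElem i (b :: v) = eletterElem i b * ewordElem i v :=
  List.prod_cons

theorem semiconjBy_t_ewordElem (i j : ℕ) (v : List Bool) :
    SemiconjBy (egen (.t i)) (ewordElem j v) (ewordElem (swapAdj i j) v) :=
  SemiconjBy.list_prod_map fun b _ => semiconjBy_t_eletterElem i j b

theorem uProd_succ (u : ℕ →₀ List Bool) (K : ℕ) :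
    uProd u (K + 1) = uProd u K * ewordElem K (u K) :=
  List.prod_range_succ _ _

theorem uProd_congr {u v : ℕ →₀ List Bool} {K : ℕ} (h : ∀ j < K, u j = v j) :
    uProd u K = uProd v K := by
  unfold uProd
  rw [List.map_congr_left fun j hj => by rw [h j (List.mem_range.mp hj)]]

theorem uProd_eq_of_le {u : ℕ →₀ List Bool} {K K' : ℕ} (hu : ∀ m, K ≤ m → u m = [])
    (hK : K ≤ K') : uProd u K' = uProd u K := by
  induction K', hK using Nat.le_induction with
  | base => rfl
  | succ K' hK ih => rw [uProd_succ, hu K' hK, ih]; exact mul_one _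

theorem stdWord0_eq {rep : FinPerm → List ℕ} {u : ℕ →₀ List Bool} {w : FinPerm} {K : ℕ}
    (hu : ∀ m, K ≤ m → u m = []) : stdWord0 rep u w = uProd u K * tword (rep w) := by
  have hN : ∀ m, u.support.sup id + 1 ≤ m → u m = [] := fun m hm =>
    Finsupp.notMem_support_iff.mp fun hmem => by
      have : id m ≤ u.support.sup id := Finset.le_sup hmem
      simp only [id] at this
      omega
  rw [stdWord0, ← uProd_eq_of_le hN (le_max_left _ K), uProd_eq_of_le hu (le_max_right _ _)]

theorem semiconjBy_t_uProd {i K : ℕ} (u : ℕ →₀ List Bool) (hK : i + 2 ≤ K) :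
    SemiconjBy (egen (.t i)) (uProd u K) (uProd (Finsupp.equivMapDomain (swapAdj i) u) K) := by
  set u' := Finsupp.equivMapDomain (swapAdj i) u
  let G := fun j => ewordElem j (u' j)
  have hu' (j : ℕ) : u' (swapAdj i j) = u j := by
    simp [u', swapAdj, Equiv.symm_swap]
  have hperm : ((List.range K).map (swapAdj i)).Perm (List.range K) := by
    refine (List.perm_ext_iff_of_nodup (List.nodup_range.map (swapAdj i).injective)
      List.nodup_range).2 fun m => ?_
    simp only [List.mem_map, List.mem_range]
    exact ⟨fun ⟨j, hj, hjm⟩ => hjm ▸ (swapAdj_apply_lt_iff hK).2 hj,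
      fun hm => ⟨swapAdj i m, (swapAdj_apply_lt_iff hK).2 hm, Equiv.swap_apply_self _ _ _⟩⟩
  have hpair : ((List.range K).map G).Pairwise Commute :=
    List.pairwise_map.2 (List.nodup_range.imp fun hne => commute_ewordElem hne _ _)
  have hprod :
      uProd u' K = ((List.range K).map fun j => ewordElem (swapAdj i j) (u j)).prod := by
    rw [uProd, (hperm.map G).symm.prod_eq' hpair, List.map_map]
    simp only [Function.comp_def, G, hu']
  rw [hprod]
  exact SemiconjBy.list_prod_map fun j _ => semiconjBy_t_ewordElem i j (u j)

theorem eletterElem_mul_uProd {i K : ℕ} (u : ℕ →₀ List Bool) (b : Bool) (hK : i < K) :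
    eletterElem i b * uProd u K = uProd (u.update i (b :: u i)) K := by
  induction K, hK using Nat.le_induction with
  | base =>
    have hcomm : Commute (eletterElem i b) (uProd u i) :=
      Commute.list_prod_right _ _ fun _ hx => by
        obtain ⟨j, hj, rfl⟩ := List.mem_map.mp hx
        exact commute_eletterElem_ewordElem (List.mem_range.mp hj).ne' b _
    have hbelow : uProd (u.update i (b :: u i)) i = uProd u i :=
      uProd_congr fun j hj => by simp [hj.ne]
    rw [uProd_succ, uProd_succ, hbelow, ← mul_assoc, hcomm.eq, mul_assoc, Finsupp.update_apply,
      if_pos rfl, ewordElem_cons]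
  | succ K hK ih =>
    rw [uProd_succ, uProd_succ, ← mul_assoc, ih, Finsupp.update_apply, if_neg (by omega)]

variable {rep : FinPerm → List ℕ}

theorem t_mul_stdWord0 (hrep : ∀ w : FinPerm, wordPerm (rep w) = w.1) (i : ℕ)
    (u : ℕ →₀ List Bool) (w : FinPerm) :
    egen (.t i) * stdWord0 rep u w
      = stdWord0 rep (Finsupp.equivMapDomain (swapAdj i) u) (w.swapAdjMul i) := by
  obtain ⟨K, hK, hu⟩ := u.exists_forall_le_eq_zero (i + 2)
  have hu' : ∀ m, K ≤ m → Finsupp.equivMapDomain (swapAdj i) u m = [] := fun m hm => by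
    rw [Finsupp.equivMapDomain_apply, swapAdj, Equiv.symm_swap, ← swapAdj,
      swapAdj_apply_of_ne (by omega) (by omega)]
    exact hu m hm
  rw [stdWord0_eq hu, stdWord0_eq hu', ← mul_assoc, (semiconjBy_t_uProd u hK).eq, mul_assoc]
  congr 1
  refine tword_eq_of_wordPerm_eq (l := i :: rep w) ?_
  rw [hrep, wordPerm, List.map_cons, List.prod_cons, ← wordPerm, hrep]
  rfl

theorem eletterElem_mul_stdWord0 (i : ℕ) (b : Bool) (u : ℕ →₀ List Bool) (w : FinPerm) :
    eletterElem i b * stdWord0 rep u w = stdWord0 rep (u.update i (b :: u i)) w := by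
  obtain ⟨K, hK, hu⟩ := u.exists_forall_le_eq_zero (i + 1)
  have hu' : ∀ m, K ≤ m → u.update i (b :: u i) m = [] := fun m hm => by
    rw [Finsupp.update_apply, if_neg (by omega)]
    exact hu m hm
  rw [stdWord0_eq hu, stdWord0_eq hu', ← mul_assoc, eletterElem_mul_uProd u b hK]

theorem stdWord0_zero_one (hrep : ∀ w : FinPerm, wordPerm (rep w) = w.1) :
    stdWord0 rep 0 FinPerm.one = 1 := by
  rw [stdWord0_eq (K := 0) fun _ _ => rfl, tword_eq_of_wordPerm_eq (l' := []) (hrep _)]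
  exact mul_one 1

theorem span_stdWord0_eq_top (hrep : ∀ w : FinPerm, wordPerm (rep w) = w.1) :
    Submodule.span ℚ (Set.range fun p : (ℕ →₀ List Bool) × FinPerm => stdWord0 rep p.1 p.2)
      = ⊤ := by
  set S :=
    Submodule.span ℚ (Set.range fun p : (ℕ →₀ List Bool) × FinPerm => stdWord0 rep p.1 p.2)
  have hgen : ∀ g (p : (ℕ →₀ List Bool) × FinPerm), egen g * stdWord0 rep p.1 p.2 ∈ S := by
    rintro (i | i | i) ⟨u, w⟩ <;> apply Submodule.subset_span
    · exact ⟨(_, _), (t_mul_stdWord0 hrep i u w).symm⟩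
    · exact ⟨(_, _), (eletterElem_mul_stdWord0 i true u w).symm⟩
    · exact ⟨(_, _), (eletterElem_mul_stdWord0 i false u w).symm⟩
  have hmul : ∀ a : FreeAlgebra ℚ EGen, ∀ z ∈ S, RingQuot.mkAlgHom ℚ ERel a * z ∈ S := by
    intro a
    induction a using FreeAlgebra.induction with
    | grade0 r =>
      intro z hz
      rw [AlgHom.commutes, ← Algebra.smul_def]
      exact S.smul_mem r hz
    | grade1 g =>
      intro z hz
      induction hz using Submodule.span_induction with
      | mem _ hx => obtain ⟨p, rfl⟩ := hx; exact hgen g p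
      | zero => rw [mul_zero]; exact S.zero_mem
      | add x y _ _ hx hy => rw [mul_add]; exact S.add_mem hx hy
      | smul r x _ hx => rw [mul_smul_comm]; exact S.smul_mem r hx
    | mul a b ha hb => intro z hz; rw [map_mul, mul_assoc]; exact ha _ (hb z hz)
    | add a b ha hb => intro z hz; rw [map_add, add_mul]; exact S.add_mem (ha z hz) (hb z hz)
  have hone : (1 : Ev0H) ∈ S :=
    Submodule.subset_span ⟨(0, FinPerm.one), stdWord0_zero_one hrep⟩
  refine eq_top_iff.2 fun v _ => ?_
  obtain ⟨a, rfl⟩ := RingQuot.mkAlgHom_surjective ℚ ERel v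
  simpa using hmul a 1 hone

end Ev0H

theorem Finsupp.lmapDomain_mul {R α : Type*} [Semiring R] (f g : α → α) :
    lmapDomain R R f * lmapDomain R R g = lmapDomain R R (f ∘ g) :=
  (lmapDomain_comp R R g f).symm

abbrev WordConfig : Type := (ℕ → List Bool) × Equiv.Perm ℕ

namespace WordConfig

def permAct (σ : Equiv.Perm ℕ) (p : WordConfig) : WordConfig := (p.1 ∘ ⇑σ⁻¹, σ * p.2)

def prependAt (i : ℕ) (v : List Bool) (p : WordConfig) : WordConfig :=
  (Function.update p.1 i (v ++ p.1 i), p.2)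

def genAct : EGen → WordConfig → WordConfig
  | .t i => permAct (swapAdj i)
  | .x i => prependAt i [true]
  | .y i => prependAt i [false]

theorem permAct_one : permAct 1 = id := rfl

theorem permAct_comp_permAct (σ τ : Equiv.Perm ℕ) :
    permAct σ ∘ permAct τ = permAct (σ * τ) := by
  funext p
  simp [permAct, mul_assoc, Function.comp_assoc]

theorem permAct_comp_prependAt (σ : Equiv.Perm ℕ) (j : ℕ) (v : List Bool) :
    permAct σ ∘ prependAt j v = prependAt (σ j) v ∘ permAct σ := by
  funext p
  simp [permAct, prependAt, Function.update_comp_equiv, Equiv.Perm.inv_def]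

theorem prependAt_comp_prependAt (j : ℕ) (v v' : List Bool) :
    prependAt j v ∘ prependAt j v' = prependAt j (v ++ v') := by
  funext p
  simp [prependAt]

theorem prependAt_comm {i j : ℕ} (h : i ≠ j) (v v' : List Bool) :
    prependAt i v ∘ prependAt j v' = prependAt j v' ∘ prependAt i v := by
  funext p
  simp [prependAt, h, h.symm, Function.update_comm h]

theorem genAct_rel ⦃a b : FreeAlgebra ℚ EGen⦄ (h : ERel a b) :
    FreeAlgebra.lift ℚ (fun g => Finsupp.lmapDomain ℚ ℚ (genAct g)) a
      = FreeAlgebra.lift ℚ (fun g => Finsupp.lmapDomain ℚ ℚ (genAct g)) b := by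
  cases h <;> simp only [map_mul, map_one, FreeAlgebra.lift_ι_apply, Finsupp.lmapDomain_mul,
    Module.End.one_eq_id, ← Finsupp.lmapDomain_id] <;> congr 1 <;> simp only [genAct]
  case tt i => rw [permAct_comp_permAct, TypeA.swapAdj_relations.mul_self, permAct_one]
  case tcomm i j hij =>
    rw [permAct_comp_permAct, permAct_comp_permAct]
    rcases hij with hij | hij
    · rw [(TypeA.swapAdj_relations.commute i j hij).eq]
    · rw [(TypeA.swapAdj_relations.commute j i hij).eq]
  case braid i => simp only [permAct_comp_permAct, TypeA.swapAdj_relations.braid]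
  case txt i | tyt i =>
    rw [permAct_comp_prependAt, Function.comp_assoc, permAct_comp_permAct,
      TypeA.swapAdj_relations.mul_self, permAct_one, Function.comp_id, swapAdj_apply_self]
  case tx i j h₁ h₂ | ty i j h₁ h₂ => rw [permAct_comp_prependAt, swapAdj_apply_of_ne h₁ h₂]
  case xx i j | yy i j =>
    rcases eq_or_ne i j with rfl | h
    · rfl
    · exact prependAt_comm h _ _
  case cross =>
    rw [Function.comp_assoc, permAct_comp_prependAt, swapAdj_apply_self, ← Function.comp_assoc,
      prependAt_comm (i := 0) (j := 0 + 1) (by omega)]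

def stdRep : Ev0H →ₐ[ℚ] Module.End ℚ (WordConfig →₀ ℚ) :=
  RingQuot.liftAlgHom ℚ
    ⟨FreeAlgebra.lift ℚ fun g => Finsupp.lmapDomain ℚ ℚ (genAct g), genAct_rel⟩

theorem stdRep_egen (g : EGen) : stdRep (egen g) = Finsupp.lmapDomain ℚ ℚ (genAct g) := by
  rw [stdRep, egen, RingQuot.liftAlgHom_mkAlgHom_apply, FreeAlgebra.lift_ι_apply]

theorem stdRep_tword (l : List ℕ) :
    stdRep (tword l) = Finsupp.lmapDomain ℚ ℚ (permAct (wordPerm l)) := by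
  induction l with
  | nil => exact (map_one stdRep).trans (Finsupp.lmapDomain_id ℚ ℚ).symm
  | cons i l ih =>
    rw [tword, List.map_cons, List.prod_cons, map_mul, ← tword, ih, stdRep_egen, genAct,
      Finsupp.lmapDomain_mul, permAct_comp_permAct]
    rfl

theorem stdRep_ewordElem (j : ℕ) (v : List Bool) :
    stdRep (ewordElem j v) = Finsupp.lmapDomain ℚ ℚ (prependAt j v) := by
  induction v with
  | nil =>
    have : prependAt j [] = id := by funext p; simp [prependAt]
    rw [this, Finsupp.lmapDomain_id]
    exact map_one stdRep
  | cons b v ih =>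
    have hb : stdRep (eletterElem j b) = Finsupp.lmapDomain ℚ ℚ (prependAt j [b]) := by
      cases b <;> exact stdRep_egen _
    rw [Ev0H.ewordElem_cons, map_mul, hb, ih, Finsupp.lmapDomain_mul, prependAt_comp_prependAt]
    rfl

theorem stdRep_uProd (u : ℕ →₀ List Bool) (K : ℕ) :
    stdRep (uProd u K) = Finsupp.lmapDomain ℚ ℚ
      fun p => (fun m => if m < K then u m ++ p.1 m else p.1 m, p.2) := by
  induction K with
  | zero => exact (map_one stdRep).trans (Finsupp.lmapDomain_id ℚ ℚ).symm
  | succ K ih =>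
    rw [Ev0H.uProd_succ, map_mul, ih, stdRep_ewordElem, Finsupp.lmapDomain_mul]
    congr 1
    funext p
    simp only [Function.comp_apply, prependAt, Prod.mk.injEq, and_true]
    funext m
    rcases lt_trichotomy m K with h | rfl | h
    · simp [h, h.ne, Nat.lt_succ_of_lt h]
    · simp
    · simp [h.ne', h.not_gt, (Nat.succ_le_of_lt h).not_gt]

theorem stdRep_stdWord0 {rep : FinPerm → List ℕ}
    (hrep : ∀ w : FinPerm, wordPerm (rep w) = w.1) (u : ℕ →₀ List Bool) (w : FinPerm) :
    stdRep (stdWord0 rep u w) (Finsupp.single (fun _ => [], 1) 1)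
      = Finsupp.single (⇑u, w.1) 1 := by
  obtain ⟨K, -, hu⟩ := u.exists_forall_le_eq_zero 0
  rw [Ev0H.stdWord0_eq hu, map_mul, Module.End.mul_apply, stdRep_tword, stdRep_uProd,
    Finsupp.lmapDomain_apply, Finsupp.lmapDomain_apply, Finsupp.mapDomain_single,
    Finsupp.mapDomain_single, permAct, hrep]
  congr
  funext m
  split_ifs with h
  · exact List.append_nil _
  · exact (hu m (not_lt.mp h)).symm

theorem linearIndependent_stdWord0 {rep : FinPerm → List ℕ}
    (hrep : ∀ w : FinPerm, wordPerm (rep w) = w.1) :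
    LinearIndependent ℚ fun p : (ℕ →₀ List Bool) × FinPerm => stdWord0 rep p.1 p.2 := by
  have hinj :
      Function.Injective fun p : (ℕ →₀ List Bool) × FinPerm => ((⇑p.1, p.2.1) : WordConfig) :=
    fun p q h => Prod.ext (DFunLike.coe_injective (congrArg Prod.fst h))
      (Subtype.ext (congrArg Prod.snd h))
  refine LinearIndependent.of_comp
    (LinearMap.applyₗ (Finsupp.single (fun _ => [], 1) 1) ∘ₗ stdRep.toLinearMap) ?_
  convert (Finsupp.linearIndependent_single_one ℚ WordConfig).comp _ hinj
  exact funext fun p => stdRep_stdWord0 hrep p.1 p.2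

end WordConfig

/-- The family `u₁ u₂ ⋯ u_k t_w`, indexed without repetition by pairs `(u, w)` with `u` a
finitely supported assignment of a word in `{x_i, y_i}` to each `i` and `w` a finitary
permutation, is a `ℚ`-vector-space basis of `ev₀(H⁺)`: it is linearly independent and spans.
Here `rep` is any choice of expression of each `w` as a product of adjacent transpositions
(`t_w` does not depend on this choice). -/
theorem statement3 (rep : FinPerm → List ℕ)
    (hrep : ∀ w : FinPerm, wordPerm (rep w) = w.1) :
    LinearIndependent ℚ
        (fun p : (ℕ →₀ List Bool) × FinPerm => stdWord0 rep p.1 p.2) ∧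
      Submodule.span ℚ
        (Set.range (fun p : (ℕ →₀ List Bool) × FinPerm => stdWord0 rep p.1 p.2)) = ⊤ :=
  ⟨WordConfig.linearIndependent_stdWord0 hrep, Ev0H.span_stdWord0_eq_top hrep⟩

end
end

section
/- In ev₀(H⁺), the elements y_b and x_a commute for all a, b ≥ 1 with a ≠ b: y_b x_a = x_a y_b. -/
/-!
The stable limit DAHA at `h = 0`, `ev₀(H⁺)`, over `ℚ`.
Generator index `i : ℕ` represents the paper's index `i + 1 ≥ 1`.
-/

noncomputable section

namespace Ev0HAux

local notation "T" => fun i => egen (EGen.t i)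
local notation "X" => fun i => egen (EGen.x i)
local notation "Y" => fun i => egen (EGen.y i)

lemma lift_rel {u v : FreeAlgebra ℚ EGen} (h : ERel u v) :
    RingQuot.mkAlgHom ℚ ERel u = RingQuot.mkAlgHom ℚ ERel v :=
  RingQuot.mkAlgHom_rel ℚ h

lemma htt (i : ℕ) : T i * T i = 1 := by
  have := lift_rel (ERel.tt i); simpa [egen, map_mul] using this

lemma htxt (i : ℕ) : T i * X i * T i = X (i + 1) := by
  have := lift_rel (ERel.txt i); simpa [egen, map_mul] using this

lemma htx (i j : ℕ) (h1 : j ≠ i) (h2 : j ≠ i + 1) : T i * X j = X j * T i := by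
  have := lift_rel (ERel.tx i j h1 h2); simpa [egen, map_mul] using this

lemma htyt (i : ℕ) : T i * Y i * T i = Y (i + 1) := by
  have := lift_rel (ERel.tyt i); simpa [egen, map_mul] using this

lemma hty (i j : ℕ) (h1 : j ≠ i) (h2 : j ≠ i + 1) : T i * Y j = Y j * T i := by
  have := lift_rel (ERel.ty i j h1 h2); simpa [egen, map_mul] using this

lemma hcross : Y 0 * T 0 * X 0 = X 1 * Y 0 * T 0 := by
  have := lift_rel ERel.cross; simpa [egen, map_mul] using this

lemma cancel_tt {M : Type*} [Monoid M] {t : M} (h : t * t = 1) (a : M) :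
    a * t * t = a := by rw [mul_assoc, h, mul_one]

/-- If `y` commutes with `t` and with `x`, it commutes with `t * x * t`. -/
lemma conj_comm {M : Type*} [Semigroup M] {t x y : M}
    (h1 : t * y = y * t) (h2 : y * x = x * y) :
    y * (t * x * t) = t * x * t * y := by
  calc y * (t * x * t) = y * t * (x * t) := by rw [mul_assoc t x t, ← mul_assoc]
    _ = t * (y * x) * t := by rw [← h1, ← mul_assoc, mul_assoc t y x]
    _ = t * (x * y) * t := by rw [h2]
    _ = t * x * (y * t) := by rw [mul_assoc, mul_assoc, ← mul_assoc t x (y * t)]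
    _ = t * x * t * y := by rw [← h1, ← mul_assoc]

lemma base1 : Y 0 * X 1 = X 1 * Y 0 := by
  calc Y 0 * X 1 = Y 0 * (T 0 * X 0 * T 0) := by rw [htxt 0]
    _ = Y 0 * T 0 * X 0 * T 0 := by rw [← mul_assoc, ← mul_assoc]
    _ = X 1 * Y 0 * T 0 * T 0 := by rw [hcross]
    _ = X 1 * Y 0 := cancel_tt (htt 0) _

lemma t0x1 : T 0 * X 1 = X 0 * T 0 := by
  rw [← htxt 0, ← mul_assoc, ← mul_assoc, htt 0, one_mul]

lemma base2 : Y 1 * X 0 = X 0 * Y 1 := by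
  calc Y 1 * X 0 = T 0 * Y 0 * T 0 * X 0 := by rw [htyt 0]
    _ = T 0 * (Y 0 * T 0 * X 0) := by rw [mul_assoc, mul_assoc, mul_assoc]
    _ = T 0 * (X 1 * Y 0 * T 0) := by rw [hcross]
    _ = T 0 * X 1 * Y 0 * T 0 := by rw [mul_assoc, mul_assoc, mul_assoc]
    _ = X 0 * (T 0 * Y 0 * T 0) := by
        rw [t0x1, mul_assoc, mul_assoc, mul_assoc]
    _ = X 0 * Y 1 := by rw [htyt 0]

lemma comma0 : ∀ a, Y 0 * X (a + 1) = X (a + 1) * Y 0 := by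
  intro a
  induction a with
  | zero => exact base1
  | succ a ih =>
    rw [← htxt (a + 1)]
    exact conj_comm (hty (a + 1) 0 (by omega) (by omega)) ih

lemma comm0b : ∀ b, Y (b + 1) * X 0 = X 0 * Y (b + 1) := by
  intro b
  induction b with
  | zero => exact base2
  | succ b ih =>
    rw [← htyt (b + 1)]
    exact (conj_comm (htx (b + 1) 0 (by omega) (by omega)) ih.symm).symm

lemma main_lt : ∀ a b, a < b → Y b * X a = X a * Y b := by
  intro a
  induction a with
  | zero =>
    intro b hb
    obtain ⟨b, rfl⟩ : ∃ c, b = c + 1 := ⟨b - 1, by omega⟩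
    exact comm0b b
  | succ a ih =>
    intro b hb
    rw [← htxt a]
    exact conj_comm (hty a b (by omega) (by omega)) (ih b (by omega))

lemma main_gt : ∀ b a, b < a → Y b * X a = X a * Y b := by
  intro b
  induction b with
  | zero =>
    intro a ha
    obtain ⟨a, rfl⟩ : ∃ c, a = c + 1 := ⟨a - 1, by omega⟩
    exact comma0 a
  | succ b ih =>
    intro a ha
    rw [← htyt b]
    exact (conj_comm (htx b a (by omega) (by omega)) (ih a (by omega)).symm).symm

end Ev0HAux

/-- In `ev₀(H⁺)`, `y_b x_a = x_a y_b` for all `a ≠ b` (paper indices `a+1 ≠ b+1` in Lean's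
0-based encoding). -/
theorem statement5 (a b : ℕ) (hab : a ≠ b) :
    egen (EGen.y b) * egen (EGen.x a) = egen (EGen.x a) * egen (EGen.y b) := by
  rcases lt_or_gt_of_ne hab with h | h
  · exact Ev0HAux.main_lt a b h
  · exact Ev0HAux.main_gt b a h

end
end

section
/- In the DAHA H_k (k ≥ 2) the following relation holds: Y_1X_1 = q·X_1Y_1·T_1T_2⋯T_{k−2}T_{k−1}²T_{k−2}⋯T_2T_1, and equivalently Y_1X_1 = q·X_1Y_1·(1 + h·∑_{i=1}^{k−1} T_1⋯T_{i−1}T_iT_{i−1}⋯T_1), where T_1⋯T_{i−1}T_iT_{i−1}⋯T_1 denotes the palindromic product (equal to T_1 when i = 1). -/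
/-!
The double affine Hecke algebra `H_k` of type `GL_k` over `K' = ℚ(h, q)`.
We realize `ℚ(h, q)` as `RatFunc (RatFunc ℚ)`, with `h` the inner variable and `q` the
outer one.  Generator indices are 0-based: the Lean index `i` of a `T`-generator
(`i : Fin (k-1)`) stands for the paper index `i + 1 ∈ {1, …, k-1}`, and the Lean index `j`
of an `X`- or `Y`-generator (`j : Fin k`) stands for the paper index `j + 1 ∈ {1, …, k}`.
-/

noncomputable section

abbrev K2 : Type := RatFunc (RatFunc ℚ)

/-- The variable `h` of `ℚ(h, q)`. -/
def hvar : K2 := RatFunc.C RatFunc.X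

/-- The variable `q` of `ℚ(h, q)`. -/
def qvar : K2 := RatFunc.X

/-- Generators of the DAHA `H_k`. -/
inductive DGen (k : ℕ) : Type
  | T : Fin (k - 1) → DGen k
  | T' : Fin (k - 1) → DGen k
  | X : Fin k → DGen k
  | X' : Fin k → DGen k
  | Y : Fin k → DGen k
  | Y' : Fin k → DGen k

open FreeAlgebra in
/-- The defining relations of `H_k`. -/
inductive DRel (k : ℕ) : FreeAlgebra K2 (DGen k) → FreeAlgebra K2 (DGen k) → Prop
  | TT' (i : Fin (k - 1)) : DRel k (ι K2 (DGen.T i) * ι K2 (DGen.T' i)) 1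
  | T'T (i : Fin (k - 1)) : DRel k (ι K2 (DGen.T' i) * ι K2 (DGen.T i)) 1
  | XX' (i : Fin k) : DRel k (ι K2 (DGen.X i) * ι K2 (DGen.X' i)) 1
  | X'X (i : Fin k) : DRel k (ι K2 (DGen.X' i) * ι K2 (DGen.X i)) 1
  | YY' (i : Fin k) : DRel k (ι K2 (DGen.Y i) * ι K2 (DGen.Y' i)) 1
  | Y'Y (i : Fin k) : DRel k (ι K2 (DGen.Y' i) * ι K2 (DGen.Y i)) 1
  | TminusT' (i : Fin (k - 1)) :
      DRel k (ι K2 (DGen.T i) - ι K2 (DGen.T' i)) (algebraMap K2 _ hvar)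
  | Tcomm (i j : Fin (k - 1)) (hij : (i : ℕ) + 1 < j ∨ (j : ℕ) + 1 < i) :
      DRel k (ι K2 (DGen.T i) * ι K2 (DGen.T j)) (ι K2 (DGen.T j) * ι K2 (DGen.T i))
  | braid (i j : Fin (k - 1)) (hij : (j : ℕ) = (i : ℕ) + 1) :
      DRel k (ι K2 (DGen.T i) * ι K2 (DGen.T j) * ι K2 (DGen.T i))
        (ι K2 (DGen.T j) * ι K2 (DGen.T i) * ι K2 (DGen.T j))
  | TXT (i : Fin (k - 1)) (a b : Fin k) (ha : (a : ℕ) = (i : ℕ)) (hb : (b : ℕ) = (i : ℕ) + 1) :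
      DRel k (ι K2 (DGen.T' i) * ι K2 (DGen.X a) * ι K2 (DGen.T' i)) (ι K2 (DGen.X b))
  | TX (i : Fin (k - 1)) (a : Fin k) (h1 : (a : ℕ) ≠ (i : ℕ)) (h2 : (a : ℕ) ≠ (i : ℕ) + 1) :
      DRel k (ι K2 (DGen.T i) * ι K2 (DGen.X a)) (ι K2 (DGen.X a) * ι K2 (DGen.T i))
  | XX (a b : Fin k) :
      DRel k (ι K2 (DGen.X a) * ι K2 (DGen.X b)) (ι K2 (DGen.X b) * ι K2 (DGen.X a))
  | TYT (i : Fin (k - 1)) (a b : Fin k) (ha : (a : ℕ) = (i : ℕ)) (hb : (b : ℕ) = (i : ℕ) + 1) :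
      DRel k (ι K2 (DGen.T i) * ι K2 (DGen.Y a) * ι K2 (DGen.T i)) (ι K2 (DGen.Y b))
  | TY (i : Fin (k - 1)) (a : Fin k) (h1 : (a : ℕ) ≠ (i : ℕ)) (h2 : (a : ℕ) ≠ (i : ℕ) + 1) :
      DRel k (ι K2 (DGen.T i) * ι K2 (DGen.Y a)) (ι K2 (DGen.Y a) * ι K2 (DGen.T i))
  | YY (a b : Fin k) :
      DRel k (ι K2 (DGen.Y a) * ι K2 (DGen.Y b)) (ι K2 (DGen.Y b) * ι K2 (DGen.Y a))
  | cross (i : Fin (k - 1)) (a b : Fin k) (hi : (i : ℕ) = 0) (ha : (a : ℕ) = 0)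
      (hb : (b : ℕ) = 1) :
      DRel k (ι K2 (DGen.Y a) * ι K2 (DGen.T i) * ι K2 (DGen.X a))
        (ι K2 (DGen.X b) * ι K2 (DGen.Y a) * ι K2 (DGen.T i))
  | det (a : Fin k) (ha : (a : ℕ) = 0) :
      DRel k (ι K2 (DGen.Y a) * ((List.finRange k).map (fun j => ι K2 (DGen.X j))).prod)
        (algebraMap K2 _ qvar *
          ((List.finRange k).map (fun j => ι K2 (DGen.X j))).prod * ι K2 (DGen.Y a))

/-- The double affine Hecke algebra `H_k`. -/
abbrev Hk (k : ℕ) : Type := RingQuot (DRel k)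

/-- The image in `H_k` of a generator. -/
def dgen {k : ℕ} (g : DGen k) : Hk k := RingQuot.mkAlgHom K2 (DRel k) (FreeAlgebra.ι K2 g)

/-- The generator `T_{i+1}` (paper index) of `H_k`, as a total function of `i : ℕ`
(with junk value `1` out of range). -/
def TgN (k i : ℕ) : Hk k := if h : i < k - 1 then dgen (DGen.T ⟨i, h⟩) else 1

/-- The generator `X_{i+1}` (paper index) of `H_k`. -/
def XgN (k i : ℕ) : Hk k := if h : i < k then dgen (DGen.X ⟨i, h⟩) else 1

/-- The generator `Y_{i+1}` (paper index) of `H_k`. -/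
def YgN (k i : ℕ) : Hk k := if h : i < k then dgen (DGen.Y ⟨i, h⟩) else 1

/-!
Let `P = X₂ ⋯ X_k`. Since `X₁ P` is the product of all `X`'s and `P` is invertible, it suffices to
show `P Y₁ = Y₁ C P` with `C = T₁ ⋯ T_{k-1}² ⋯ T₁`, and both sides are built one factor at a time.
The cross relation gives `X₂ Y₁ = Y₁ T₁² X₂`; since `X_{m+1} = T_m⁻¹ X_m T_m⁻¹` and `T_m` commutes
with `Y₁` for `m ≥ 2`, it follows that `X_{m+1} Y₁ = Y₁ R_m X_{m+1}` with `R_m` the conjugate of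
`T₁²` by `T₂ ⋯ T_m`. Moving `X₂ ⋯ X_m` across `R_m` turns it into `K_m`, the conjugate of `T_m²`
by `T_{m-1} ⋯ T₁`; the inductive step is the identity `T_{i+1} T_i² T_{i+1}⁻¹ = T_i⁻¹ T_{i+1}² T_i`,
a consequence of the braid relation and the quadratic relation `T_i² = 1 + h T_i`. Finally the
palindromes satisfy `C_m = C_{m-1} K_m`, and expanding their middle squares by the quadratic
relation gives the second form.
-/

theorem Units.mul_mul_self_mul_inv_of_braid {R : Type*} [Ring R] {c : R}
    (hc : ∀ x : R, Commute c x) {a b : Rˣ} (hbraid : a * b * a = b * a * b)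
    (ha : (a * a : R) = 1 + c * a) (hb : (b * b : R) = 1 + c * b) :
    (b * (a * a) * ↑b⁻¹ : R) = ↑a⁻¹ * (b * b) * a := by
  have hconj : b * a * b⁻¹ = a⁻¹ * b * a :=
    calc b * a * b⁻¹ = a⁻¹ * (a * b * a) * b⁻¹ := by group
      _ = a⁻¹ * (b * a * b) * b⁻¹ := by rw [hbraid]
      _ = a⁻¹ * b * a := by group
  have hconj' : (b * a * ↑b⁻¹ : R) = ↑a⁻¹ * b * a := by exact_mod_cast congrArg Units.val hconj
  have expand : ∀ x y z : R, x * (1 + c * y) * z = x * z + c * (x * y * z) := fun x y z => by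
    rw [mul_add, add_mul, mul_one, ← mul_assoc x c, ← (hc x).eq]
    simp only [mul_assoc]
  rw [ha, hb, expand, expand, Units.mul_inv, Units.inv_mul, hconj']

namespace DAHA

variable {k : ℕ}

theorem dgen_rel {a b : FreeAlgebra K2 (DGen k)} (h : DRel k a b) :
    RingQuot.mkAlgHom K2 (DRel k) a = RingQuot.mkAlgHom K2 (DRel k) b :=
  RingQuot.mkAlgHom_rel _ h

def Tunit (k i : ℕ) : (Hk k)ˣ where
  val := TgN k i
  inv := if h : i < k - 1 then dgen (DGen.T' ⟨i, h⟩) else 1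
  val_inv := by
    unfold TgN
    split_ifs with h
    · simpa only [dgen, ← map_mul, map_one] using dgen_rel (DRel.TT' ⟨i, h⟩)
    · exact one_mul 1
  inv_val := by
    unfold TgN
    split_ifs with h
    · simpa only [dgen, ← map_mul, map_one] using dgen_rel (DRel.T'T ⟨i, h⟩)
    · exact one_mul 1

abbrev TinvN (k i : ℕ) : Hk k := ↑(Tunit k i)⁻¹

theorem TgN_mul_TinvN (i : ℕ) : TgN k i * TinvN k i = 1 := (Tunit k i).mul_inv

theorem TinvN_mul_TgN (i : ℕ) : TinvN k i * TgN k i = 1 := (Tunit k i).inv_mul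

theorem isUnit_XgN (a : ℕ) : IsUnit (XgN k a) := by
  refine ⟨⟨XgN k a, if h : a < k then dgen (DGen.X' ⟨a, h⟩) else 1, ?_, ?_⟩, rfl⟩ <;>
  · unfold XgN
    split_ifs with h
    · first
        | simpa only [dgen, ← map_mul, map_one] using dgen_rel (DRel.XX' ⟨a, h⟩)
        | simpa only [dgen, ← map_mul, map_one] using dgen_rel (DRel.X'X ⟨a, h⟩)
    · exact one_mul 1

theorem TgN_mul_self {i : ℕ} (h : i < k - 1) :
    TgN k i * TgN k i = 1 + algebraMap K2 (Hk k) hvar * TgN k i := by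
  have hsub : TgN k i - TinvN k i = algebraMap K2 (Hk k) hvar := by
    have hrel := dgen_rel (DRel.TminusT' ⟨i, h⟩)
    rw [map_sub, AlgHom.commutes] at hrel
    simpa only [TinvN, Tunit, TgN, dgen, dif_pos h, Units.inv_mk] using hrel
  calc TgN k i * TgN k i = TgN k i * (TinvN k i + algebraMap K2 (Hk k) hvar) := by
        rw [← hsub, add_sub_cancel]
    _ = 1 + algebraMap K2 (Hk k) hvar * TgN k i := by
        rw [mul_add, TgN_mul_TinvN, Algebra.commutes]

theorem commute_TgN_TgN {i j : ℕ} (hij : i + 1 < j ∨ j + 1 < i) :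
    Commute (TgN k i) (TgN k j) := by
  unfold TgN
  split_ifs with hi hj
  · simpa only [Commute, SemiconjBy, dgen, ← map_mul] using
      dgen_rel (DRel.Tcomm ⟨i, hi⟩ ⟨j, hj⟩ hij)
  all_goals simp

theorem TgN_braid {i : ℕ} (h : i + 1 < k - 1) :
    TgN k i * TgN k (i + 1) * TgN k i = TgN k (i + 1) * TgN k i * TgN k (i + 1) := by
  have hi : i < k - 1 := by omega
  unfold TgN
  rw [dif_pos hi, dif_pos h]
  simpa only [dgen, ← map_mul] using dgen_rel (DRel.braid ⟨i, hi⟩ ⟨i + 1, h⟩ rfl)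

theorem TinvN_mul_XgN_mul_TinvN {i : ℕ} (h : i < k - 1) :
    TinvN k i * XgN k i * TinvN k i = XgN k (i + 1) := by
  have hi : i < k := by omega
  have hi' : i + 1 < k := by omega
  simp only [TinvN, Tunit, XgN, dif_pos h, dif_pos hi, dif_pos hi', Units.inv_mk]
  simpa only [dgen, ← map_mul] using dgen_rel (DRel.TXT ⟨i, h⟩ ⟨i, hi⟩ ⟨i + 1, hi'⟩ rfl rfl)

theorem XgN_mul_TinvN {i : ℕ} (h : i < k - 1) :
    XgN k i * TinvN k i = TgN k i * XgN k (i + 1) := by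
  rw [← TinvN_mul_XgN_mul_TinvN h, ← mul_assoc, ← mul_assoc, TgN_mul_TinvN, one_mul]

theorem TinvN_mul_XgN {i : ℕ} (h : i < k - 1) :
    TinvN k i * XgN k i = XgN k (i + 1) * TgN k i := by
  rw [← TinvN_mul_XgN_mul_TinvN h, mul_assoc _ (TinvN k i), TinvN_mul_TgN, mul_one]

theorem commute_TgN_XgN {i a : ℕ} (h1 : a ≠ i) (h2 : a ≠ i + 1) :
    Commute (TgN k i) (XgN k a) := by
  unfold TgN XgN
  split_ifs with hi ha
  · simpa only [Commute, SemiconjBy, dgen, ← map_mul] using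
      dgen_rel (DRel.TX ⟨i, hi⟩ ⟨a, ha⟩ h1 h2)
  all_goals simp

theorem commute_TgN_YgN_zero {i : ℕ} (hi : i ≠ 0) : Commute (TgN k i) (YgN k 0) := by
  unfold TgN YgN
  split_ifs with hik hk
  · simpa only [Commute, SemiconjBy, dgen, ← map_mul] using
      dgen_rel (DRel.TY ⟨i, hik⟩ ⟨0, hk⟩ (Ne.symm hi) (show (0 : ℕ) ≠ i + 1 by omega))
  all_goals simp

theorem YgN_zero_mul_TgN_zero_mul_XgN_zero (hk : 1 < k) :
    YgN k 0 * TgN k 0 * XgN k 0 = XgN k 1 * YgN k 0 * TgN k 0 := by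
  have h0 : 0 < k - 1 := by omega
  have h0' : 0 < k := by omega
  simp only [TgN, XgN, YgN, dif_pos h0, dif_pos h0', dif_pos hk]
  simpa only [dgen, map_mul] using dgen_rel (DRel.cross ⟨0, h0⟩ ⟨0, h0'⟩ ⟨1, hk⟩ rfl rfl rfl)

theorem YgN_zero_mul_prod_XgN (hk : 0 < k) :
    YgN k 0 * ((List.range k).map (XgN k)).prod =
      algebraMap K2 (Hk k) qvar * ((List.range k).map (XgN k)).prod * YgN k 0 := by
  have hX : ((List.range k).map (XgN k)).prod =
      ((List.finRange k).map fun j => dgen (DGen.X j)).prod := by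
    rw [← List.map_coe_finRange_eq_range, List.map_map]
    congr 2
    funext j
    exact dif_pos j.2
  have hrel := dgen_rel (DRel.det ⟨0, hk⟩ rfl)
  simp only [map_mul, map_list_prod, List.map_map, AlgHom.commutes] at hrel
  rw [hX, YgN, dif_pos hk]
  exact hrel

theorem TgN_mul_sq_mul_TinvN {i : ℕ} (h : i + 1 < k - 1) :
    TgN k (i + 1) * (TgN k i * TgN k i) * TinvN k (i + 1) =
      TinvN k i * (TgN k (i + 1) * TgN k (i + 1)) * TgN k i :=
  Units.mul_mul_self_mul_inv_of_braid (a := Tunit k i) (b := Tunit k (i + 1))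
    (fun x => Algebra.commute_algebraMap_left hvar x)
    (Units.ext (TgN_braid h)) (TgN_mul_self (by omega)) (TgN_mul_self h)

def Tasc (k n : ℕ) : Hk k := ((List.range n).map (TgN k)).prod

def Tdesc (k n : ℕ) : Hk k := ((List.range n).reverse.map (TgN k)).prod

theorem Tasc_succ (n : ℕ) : Tasc k (n + 1) = Tasc k n * TgN k n := by
  simp [Tasc, List.range_succ]

theorem Tdesc_succ (n : ℕ) : Tdesc k (n + 1) = TgN k n * Tdesc k n := by
  simp [Tdesc, List.range_succ]

theorem commute_TgN_Tdesc {n j : ℕ} (h : n < j) : Commute (TgN k j) (Tdesc k n) :=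
  Commute.list_prod_right _ _ fun x hx => by
    obtain ⟨i, hi, rfl⟩ := List.mem_map.mp hx
    exact commute_TgN_TgN (Or.inr (by simp at hi; omega))

/-- `Ksq k n = (T_{n-1} ⋯ T_0)⁻¹ T_n² (T_{n-1} ⋯ T_0)` (`Tdesc_mul_Ksq`). -/
def Ksq (k : ℕ) : ℕ → Hk k
  | 0 => TgN k 0 * TgN k 0
  | n + 1 => TgN k (n + 1) * Ksq k n * TinvN k (n + 1)

theorem Tdesc_mul_Ksq : ∀ n, n < k - 1 → Tdesc k n * Ksq k n = TgN k n * TgN k n * Tdesc k n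
  | 0, _ => by simp [Tdesc, Ksq]
  | n + 1, h => by
    have hT := commute_TgN_Tdesc (k := k) (Nat.lt_succ_self n)
    have hT' : Commute (TinvN k (n + 1)) (Tdesc k n) := hT.units_inv_left
    calc Tdesc k (n + 1) * Ksq k (n + 1)
        = TgN k n * (TgN k (n + 1) * (Tdesc k n * Ksq k n) * TinvN k (n + 1)) := by
          rw [Tdesc_succ, Ksq]
          simp only [mul_assoc]
          rw [hT.symm.left_comm]
      _ = TgN k n * (TgN k (n + 1) * (TgN k n * TgN k n) * TinvN k (n + 1)) * Tdesc k n := by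
          rw [Tdesc_mul_Ksq n (by omega)]
          simp only [mul_assoc]
          rw [hT'.symm.eq]
      _ = TgN k (n + 1) * TgN k (n + 1) * Tdesc k (n + 1) := by
          rw [TgN_mul_sq_mul_TinvN h, Tdesc_succ]
          simp only [← mul_assoc]
          rw [TgN_mul_TinvN, one_mul]

theorem Tasc_mul_Tdesc_succ {n : ℕ} (h : n < k - 1) :
    Tasc k (n + 1) * Tdesc k (n + 1) = Tasc k n * Tdesc k n * Ksq k n := by
  rw [mul_assoc, Tdesc_mul_Ksq n h, Tasc_succ, Tdesc_succ]
  simp only [mul_assoc]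

theorem Tasc_mul_Tdesc_eq_one_add_sum : ∀ n, n ≤ k - 1 →
    Tasc k n * Tdesc k n =
      1 + algebraMap K2 (Hk k) hvar * ∑ m ∈ Finset.range n, Tasc k (m + 1) * Tdesc k m
  | 0, _ => by simp [Tasc, Tdesc]
  | n + 1, h => by
    rw [Finset.sum_range_succ, mul_add, ← add_assoc, ← Tasc_mul_Tdesc_eq_one_add_sum n (by omega),
      Tasc_succ, Tdesc_succ, mul_assoc, ← mul_assoc (TgN k n), TgN_mul_self (by omega),
      add_mul, one_mul, mul_add]
    congr 1
    simp only [mul_assoc]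
    rw [← mul_assoc (Tasc k n), ← Algebra.commutes]
    simp only [mul_assoc]

/-- `Rsq k m = (T_1 ⋯ T_m)⁻¹ T_0² (T_1 ⋯ T_m)`. -/
def Rsq (k : ℕ) : ℕ → Hk k
  | 0 => TgN k 0 * TgN k 0
  | m + 1 => TinvN k (m + 1) * Rsq k m * TgN k (m + 1)

theorem commute_XgN_Rsq {b : ℕ} : ∀ m, m + 2 ≤ b → Commute (XgN k b) (Rsq k m)
  | 0, h => by
    have hT := (commute_TgN_XgN (k := k) (i := 0) (a := b) (by omega) (by omega)).symm
    exact hT.mul_right hT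
  | m + 1, h => by
    have hT := (commute_TgN_XgN (k := k) (i := m + 1) (a := b) (by omega) (by omega)).symm
    exact ((hT.units_inv_right (u := Tunit k (m + 1))).mul_right
      (commute_XgN_Rsq m (by omega))).mul_right hT

theorem XgN_succ_mul_YgN_zero : ∀ m, m + 1 < k →
    XgN k (m + 1) * YgN k 0 = YgN k 0 * (Rsq k m * XgN k (m + 1))
  | 0, hk => by
    have hX1 := TinvN_mul_XgN_mul_TinvN (k := k) (i := 0) (by omega)
    have hX0 : XgN k 0 = TgN k 0 * XgN k 1 * TgN k 0 := by
      rw [← hX1]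
      simp only [← mul_assoc]
      rw [TgN_mul_TinvN, one_mul, mul_assoc, TinvN_mul_TgN, mul_one]
    have hcross := YgN_zero_mul_TgN_zero_mul_XgN_zero hk
    rw [hX0] at hcross
    refine ((Tunit k 0).isUnit.mul_left_inj).mp ?_
    change XgN k 1 * YgN k 0 * TgN k 0 = YgN k 0 * (TgN k 0 * TgN k 0 * XgN k 1) * TgN k 0
    rw [← hcross]
    simp only [mul_assoc]
  | m + 1, hm => by
    have h : m + 1 < k - 1 := by omega
    have hY : Commute (TinvN k (m + 1)) (YgN k 0) :=
      (commute_TgN_YgN_zero (k := k) m.succ_ne_zero).units_inv_left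
    calc XgN k (m + 1 + 1) * YgN k 0
        = TinvN k (m + 1) * (XgN k (m + 1) * YgN k 0) * TinvN k (m + 1) := by
          rw [← TinvN_mul_XgN_mul_TinvN h, mul_assoc, hY.eq]
          simp only [mul_assoc]
      _ = YgN k 0 * (TinvN k (m + 1) * Rsq k m * (XgN k (m + 1) * TinvN k (m + 1))) := by
          rw [XgN_succ_mul_YgN_zero m (by omega)]
          simp only [← mul_assoc]
          rw [hY.eq]
      _ = YgN k 0 * (Rsq k (m + 1) * XgN k (m + 1 + 1)) := by
          rw [XgN_mul_TinvN h, Rsq]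
          simp only [mul_assoc]

def Xprod (k n : ℕ) : Hk k := ((List.range' 1 n).map (XgN k)).prod

theorem Xprod_succ (n : ℕ) : Xprod k (n + 1) = Xprod k n * XgN k (n + 1) := by
  simp [Xprod, List.range'_concat, add_comm]

theorem commute_TgN_Xprod {n j : ℕ} (h : n < j) : Commute (TgN k j) (Xprod k n) :=
  Commute.list_prod_right _ _ fun x hx => by
    obtain ⟨a, ha, rfl⟩ := List.mem_map.mp hx
    rw [List.mem_range'_1] at ha
    exact commute_TgN_XgN (by omega) (by omega)

theorem Xprod_mul_Rsq : ∀ n, n < k - 1 → Xprod k n * Rsq k n = Ksq k n * Xprod k n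
  | 0, _ => by simp [Xprod, Rsq, Ksq]
  | n + 1, h => by
    have hT := commute_TgN_Xprod (k := k) (Nat.lt_succ_self n)
    have hT' : Commute (TinvN k (n + 1)) (Xprod k n) := hT.units_inv_left
    calc Xprod k (n + 1) * Rsq k (n + 1)
        = TgN k (n + 1) * (Xprod k n * Rsq k n) * (XgN k (n + 1 + 1) * TgN k (n + 1)) := by
          rw [Xprod_succ, Rsq]
          simp only [← mul_assoc]
          rw [mul_assoc (Xprod k n), XgN_mul_TinvN h, ← mul_assoc, ← hT.eq,
            mul_assoc _ (XgN k _), (commute_XgN_Rsq n (by omega)).eq]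
          simp only [mul_assoc]
      _ = TgN k (n + 1) * Ksq k n * TinvN k (n + 1) * (Xprod k n * XgN k (n + 1)) := by
          rw [Xprod_mul_Rsq n (by omega), ← TinvN_mul_XgN h]
          simp only [mul_assoc]
          rw [hT'.symm.left_comm]
      _ = Ksq k (n + 1) * Xprod k (n + 1) := by rw [Ksq, Xprod_succ]

theorem Xprod_mul_YgN_zero : ∀ n, n ≤ k - 1 →
    Xprod k n * YgN k 0 = YgN k 0 * (Tasc k n * Tdesc k n * Xprod k n)
  | 0, _ => by simp [Xprod, Tasc, Tdesc]
  | n + 1, h => by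
    calc Xprod k (n + 1) * YgN k 0
        = Xprod k n * YgN k 0 * (Rsq k n * XgN k (n + 1)) := by
          rw [Xprod_succ, mul_assoc, XgN_succ_mul_YgN_zero n (by omega), mul_assoc]
      _ = YgN k 0 * (Tasc k n * Tdesc k n * (Xprod k n * Rsq k n) * XgN k (n + 1)) := by
          rw [Xprod_mul_YgN_zero n (by omega)]
          simp only [mul_assoc]
      _ = YgN k 0 * (Tasc k (n + 1) * Tdesc k (n + 1) * Xprod k (n + 1)) := by
          rw [Xprod_mul_Rsq n (by omega), Tasc_mul_Tdesc_succ (by omega), Xprod_succ]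
          simp only [mul_assoc]

theorem YgN_zero_mul_XgN_zero (hk : 0 < k) :
    YgN k 0 * XgN k 0 = algebraMap K2 (Hk k) qvar * (XgN k 0 * YgN k 0) *
      (Tasc k (k - 1) * Tdesc k (k - 1)) := by
  have hprod : ((List.range k).map (XgN k)).prod = XgN k 0 * Xprod k (k - 1) := by
    obtain ⟨n, rfl⟩ : ∃ n, k = n + 1 := ⟨k - 1, by omega⟩
    simp [Xprod, List.range_eq_range', List.range'_succ]
  have hunit : IsUnit (Xprod k (k - 1)) := List.prod_isUnit fun x hx => by
    obtain ⟨a, -, rfl⟩ := List.mem_map.mp hx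
    exact isUnit_XgN a
  have hdet := YgN_zero_mul_prod_XgN hk
  rw [hprod] at hdet
  refine (hunit.mul_left_inj).mp ?_
  calc YgN k 0 * XgN k 0 * Xprod k (k - 1)
      = algebraMap K2 (Hk k) qvar * XgN k 0 * (Xprod k (k - 1) * YgN k 0) := by
        rw [mul_assoc, hdet]
        simp only [mul_assoc]
    _ = _ := by
        rw [Xprod_mul_YgN_zero (k - 1) le_rfl]
        simp only [mul_assoc]

end DAHA

/-- In `H_k` (`k ≥ 2`): `Y₁X₁ = q·X₁Y₁·T₁T₂⋯T_{k−2}T_{k−1}²T_{k−2}⋯T₂T₁`, and equivalently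
`Y₁X₁ = q·X₁Y₁·(1 + h·∑_{i=1}^{k−1} T₁⋯T_{i−1}T_iT_{i−1}⋯T₁)`.  In the 0-based encoding,
the long palindrome with the squared middle is the product over the index list
`[0, …, k−2] ++ [k−2, …, 0]`, and the palindrome `T₁⋯T_{i−1}T_iT_{i−1}⋯T₁` for paper index
`i = m + 1` is the product over `[0, …, m] ++ [m−1, …, 0]`. -/
theorem statement6 (k : ℕ) (hk : 2 ≤ k) :
    (YgN k 0 * XgN k 0 =
        algebraMap K2 (Hk k) qvar * (XgN k 0 * YgN k 0) *
          (((List.range (k - 1) ++ (List.range (k - 1)).reverse).map (TgN k)).prod)) ∧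
    (YgN k 0 * XgN k 0 =
        algebraMap K2 (Hk k) qvar * (XgN k 0 * YgN k 0) *
          (1 + algebraMap K2 (Hk k) hvar *
            ∑ m ∈ Finset.range (k - 1),
              (((List.range (m + 1) ++ (List.range m).reverse).map (TgN k)).prod))) := by
  have hpal (a b : ℕ) : ((List.range a ++ (List.range b).reverse).map (TgN k)).prod =
      DAHA.Tasc k a * DAHA.Tdesc k b := by
    rw [List.map_append, List.prod_append]
    rfl
  have key := DAHA.YgN_zero_mul_XgN_zero (k := k) (by omega)
  refine ⟨?_, ?_⟩
  · rwa [hpal]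
  · simp only [hpal]
    rwa [← DAHA.Tasc_mul_Tdesc_eq_one_add_sum _ le_rfl]
end
end

section
/- In the DAHA H_k (k ≥ 2), for every 1 ≤ a ≤ k the following relation holds: Y_aX_a = q·(X_aY_a + h·∑_{i=1}^{a−1} X_iY_i·T_{(i,a)})·(1 + h·∑_{p=a}^{k−1} T_{(a,p+1)}), where for 1 ≤ c < d ≤ k, T_{(c,d)} denotes the palindromic product T_{d−1}T_{d−2}⋯T_{c+1}T_cT_{c+1}⋯T_{d−2}T_{d−1} (so T_{(c,c+1)} = T_c), and empty sums are 0. -/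
/-!
The double affine Hecke algebra `H_k` of type `GL_k` over `K' = ℚ(h, q)`.
We realize `ℚ(h, q)` as `RatFunc (RatFunc ℚ)`, with `h` the inner variable and `q` the
outer one.  Generator indices are 0-based: the Lean index `i` of a `T`-generator
(`i : Fin (k-1)`) stands for the paper index `i + 1 ∈ {1, …, k-1}`, and the Lean index `j`
of an `X`- or `Y`-generator (`j : Fin k`) stands for the paper index `j + 1 ∈ {1, …, k}`.
-/

noncomputable section

/-- The list `[hi, hi-1, …, lo, lo+1, …, hi]` of 0-based indices of the palindromic product
`T_{(c,d)} = T_{d−1}⋯T_{c+1}T_cT_{c+1}⋯T_{d−1}` (paper indices `c = lo + 1`, `d = hi + 2`). -/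
def palList (lo hi : ℕ) : List ℕ :=
  (List.range' lo (hi + 1 - lo)).reverse ++ List.range' (lo + 1) (hi - lo)

/-- The palindromic product `T_{(lo+1, hi+2)}` in `H_k` (0-based indices `lo ≤ hi`). -/
def palT (k lo hi : ℕ) : Hk k := ((palList lo hi).map (TgN k)).prod

/-!
Conjugation by `T_a` (`Y_{a+1} = T_a Y_a T_a`, `X_{a+1} = T_a⁻¹ X_a T_a⁻¹`) gives the relation
for `a + 1` from the one for `a`: the factor `(T_a⋯T_{k−1})(T_{k−1}⋯T_a)` absorbs one `T_a` on
each side, and `T_a X_aY_a T_a = X_{a+1}Y_{a+1} + h X_aY_aT_a` creates the new summand of the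
first factor. For `a = 1`, the cross relation, pushed along by the braid relations, gives
`X_2⋯X_k Y_1 = Y_1 (T_1⋯T_{k−1})(T_{k−1}⋯T_1) X_2⋯X_k`, and `Y_1 X_1⋯X_k = q X_1⋯X_k Y_1`
then yields `Y_1X_1 = q X_1Y_1 (T_1⋯T_{k−1})(T_{k−1}⋯T_1)`. Finally `T_i² = 1 + hT_i` expands
`(T_a⋯T_{k−1})(T_{k−1}⋯T_a)` into `1 + h ∑_p T_{(a,p+1)}`, because the palindromic word
centred at `T_p` equals the one centred at `T_a` in the braid monoid.
-/

section BraidWords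

variable {M : Type*} [Monoid M] (f : ℕ → M)

def ascProd (lo n : ℕ) : M := ((List.range' lo n).map f).prod

def descProd (lo n : ℕ) : M := ((List.range' lo n).reverse.map f).prod

def palProd (lo hi : ℕ) : M := ((palList lo hi).map f).prod

@[simp] lemma ascProd_zero (lo : ℕ) : ascProd f lo 0 = 1 := rfl

@[simp] lemma descProd_zero (lo : ℕ) : descProd f lo 0 = 1 := rfl

lemma ascProd_succ (lo n : ℕ) : ascProd f lo (n + 1) = ascProd f lo n * f (lo + n) := by
  simp [ascProd, List.range'_concat]

lemma ascProd_succ' (lo n : ℕ) : ascProd f lo (n + 1) = f lo * ascProd f (lo + 1) n := by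
  simp [ascProd, List.range'_succ]

lemma descProd_succ (lo n : ℕ) : descProd f lo (n + 1) = f (lo + n) * descProd f lo n := by
  simp [descProd, List.range'_concat]

lemma descProd_succ' (lo n : ℕ) : descProd f lo (n + 1) = descProd f (lo + 1) n * f lo := by
  simp [descProd, List.range'_succ]

lemma palProd_eq_descProd_mul_ascProd (lo hi : ℕ) :
    palProd f lo hi = descProd f lo (hi + 1 - lo) * ascProd f (lo + 1) (hi - lo) := by
  simp [palProd, palList, descProd, ascProd]

@[simp] lemma palProd_self (lo : ℕ) : palProd f lo lo = f lo := by
  simp [palProd_eq_descProd_mul_ascProd, descProd]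

lemma palProd_succ {lo hi : ℕ} (h : lo ≤ hi) :
    palProd f lo (hi + 1) = f (hi + 1) * palProd f lo hi * f (hi + 1) := by
  obtain ⟨n, rfl⟩ := Nat.exists_eq_add_of_le h
  rw [palProd_eq_descProd_mul_ascProd, palProd_eq_descProd_mul_ascProd,
    show lo + n + 1 + 1 - lo = n + 1 + 1 by omega, show lo + n + 1 - lo = n + 1 by omega,
    show lo + n - lo = n by omega, descProd_succ, ascProd_succ,
    show lo + (n + 1) = lo + n + 1 by omega, show lo + 1 + n = lo + n + 1 by omega]
  simp only [mul_assoc]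

variable {f}

lemma Commute.ascProd_right {x : M} {lo n : ℕ}
    (h : ∀ i, lo ≤ i → i < lo + n → Commute x (f i)) :
    Commute x (ascProd f lo n) :=
  Commute.list_prod_right _ _ <| by
    simpa [List.mem_range'_1] using fun _ i h1 h2 hi => hi ▸ h i h1 h2

lemma Commute.descProd_right {x : M} {lo n : ℕ}
    (h : ∀ i, lo ≤ i → i < lo + n → Commute x (f i)) :
    Commute x (descProd f lo n) :=
  Commute.list_prod_right _ _ <| by
    simpa [List.mem_range'_1] using fun _ i h1 h2 hi => hi ▸ h i h1 h2

lemma isUnit_ascProd {lo n : ℕ} (h : ∀ i, IsUnit (f i)) : IsUnit (ascProd f lo n) :=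
  List.prod_isUnit <| by simpa using fun _ i _ _ hi => hi ▸ h i

lemma palProd_eq_ascProd_mul_descProd {lo n : ℕ}
    (braid : ∀ i, lo ≤ i → i < lo + n → f i * f (i + 1) * f i = f (i + 1) * f i * f (i + 1))
    (comm : ∀ i j, lo ≤ i → i + 1 < j → j ≤ lo + n → Commute (f i) (f j)) :
    palProd f lo (lo + n) = ascProd f lo n * f (lo + n) * descProd f lo n := by
  induction n with
  | zero => simp
  | succ n ih =>
    have hI : Commute (f (lo + n + 1)) (ascProd f lo n) :=
      .ascProd_right fun i h1 h2 => (comm i _ h1 (by omega) (by omega)).symm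
    have hD : Commute (f (lo + n + 1)) (descProd f lo n) :=
      .descProd_right fun i h1 h2 => (comm i _ h1 (by omega) (by omega)).symm
    rw [← add_assoc, palProd_succ f (by omega),
      ih (fun i h1 h2 => braid i h1 (by omega)) (fun i j h1 h2 h3 => comm i j h1 h2 (by omega)),
      ascProd_succ, descProd_succ]
    calc f (lo + n + 1) * (ascProd f lo n * f (lo + n) * descProd f lo n) * f (lo + n + 1)
        = ascProd f lo n * (f (lo + n + 1) * f (lo + n) * f (lo + n + 1)) * descProd f lo n := by
          simp only [mul_assoc, hI.left_comm, hD.eq]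
      _ = ascProd f lo n * f (lo + n) * f (lo + n + 1) * (f (lo + n) * descProd f lo n) := by
          rw [← braid (lo + n) (by omega) (by omega)]
          simp only [mul_assoc]

end BraidWords

lemma ascProd_mul_descProd_eq_one_add_sum {R A : Type*} [CommSemiring R] [Semiring A]
    [Algebra R A] {f : ℕ → A} (c : R) {lo n : ℕ}
    (quad : ∀ i, lo ≤ i → i < lo + n → f i * f i = 1 + algebraMap R A c * f i)
    (braid : ∀ i, lo ≤ i → i + 1 < lo + n → f i * f (i + 1) * f i = f (i + 1) * f i * f (i + 1))
    (comm : ∀ i j, lo ≤ i → i + 1 < j → j < lo + n → Commute (f i) (f j)) :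
    ascProd f lo n * descProd f lo n =
      1 + algebraMap R A c * ∑ j ∈ Finset.range n, palProd f lo (lo + j) := by
  induction n with
  | zero => simp
  | succ n ih =>
    rw [ascProd_succ, descProd_succ, Finset.sum_range_succ, mul_add, ← add_assoc,
      ← ih (fun i h1 h2 => quad i h1 (by omega)) (fun i h1 h2 => braid i h1 (by omega))
        (fun i j h1 h2 h3 => comm i j h1 h2 (by omega)),
      palProd_eq_ascProd_mul_descProd (fun i h1 h2 => braid i h1 (by omega))
        (fun i j h1 h2 h3 => comm i j h1 h2 (by omega))]
    calc ascProd f lo n * f (lo + n) * (f (lo + n) * descProd f lo n)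
        = ascProd f lo n * (f (lo + n) * f (lo + n)) * descProd f lo n := by
          simp only [mul_assoc]
      _ = _ := by
          rw [quad _ (by omega) (by omega), mul_add, add_mul, mul_one, ← mul_assoc,
            ← Algebra.commutes, mul_assoc, mul_assoc, mul_assoc]

def TinvN (k i : ℕ) : Hk k := if h : i < k - 1 then dgen (DGen.T' ⟨i, h⟩) else 1

section DAHA

variable {k : ℕ}

local notation "T" => TgN k
local notation "T'" => TinvN k
local notation "X" => XgN k
local notation "Y" => YgN k
local notation "𝔥" => algebraMap K2 (Hk k) hvar
local notation "𝔮" => algebraMap K2 (Hk k) qvar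

lemma dgen_rel {x y : FreeAlgebra K2 (DGen k)} (h : DRel k x y) :
    RingQuot.mkAlgHom K2 (DRel k) x = RingQuot.mkAlgHom K2 (DRel k) y :=
  RingQuot.mkAlgHom_rel K2 h

lemma dgen_commute {g g' : DGen k}
    (h : DRel k (FreeAlgebra.ι K2 g * FreeAlgebra.ι K2 g')
      (FreeAlgebra.ι K2 g' * FreeAlgebra.ι K2 g)) :
    Commute (dgen g) (dgen g') := by
  simpa only [Commute, SemiconjBy, dgen, map_mul] using dgen_rel h

lemma TgN_mul_TinvN (i : ℕ) : T i * T' i = 1 := by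
  unfold TgN TinvN
  split_ifs with hi
  · simpa only [dgen, map_mul, map_one] using dgen_rel (DRel.TT' ⟨i, hi⟩)
  · exact one_mul 1

lemma TinvN_mul_TgN (i : ℕ) : T' i * T i = 1 := by
  unfold TgN TinvN
  split_ifs with hi
  · simpa only [dgen, map_mul, map_one] using dgen_rel (DRel.T'T ⟨i, hi⟩)
  · exact one_mul 1

lemma TinvN_eq {i : ℕ} (h : i < k - 1) : T' i = T i - 𝔥 := by
  have hrel := dgen_rel (DRel.TminusT' ⟨i, h⟩)
  rw [map_sub, AlgHom.commutes] at hrel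
  rw [TgN, TinvN, dif_pos h, dif_pos h, dgen, dgen, ← hrel, sub_sub_cancel]

lemma TgN_mul_self {i : ℕ} (h : i < k - 1) : T i * T i = 1 + 𝔥 * T i := by
  have hinv := TgN_mul_TinvN (k := k) i
  rw [TinvN_eq h, mul_sub, sub_eq_iff_eq_add, ← Algebra.commutes] at hinv
  rw [hinv, add_comm]

lemma commute_TgN_TgN {i j : ℕ} (hij : i + 1 < j ∨ j + 1 < i) : Commute (T i) (T j) := by
  unfold TgN
  split_ifs with hi hj
  · exact dgen_commute (DRel.Tcomm ⟨i, hi⟩ ⟨j, hj⟩ hij)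
  all_goals simp

lemma TgN_braid {i : ℕ} (h : i + 1 < k - 1) :
    T i * T (i + 1) * T i = T (i + 1) * T i * T (i + 1) := by
  rw [TgN, TgN, dif_pos h, dif_pos (by omega)]
  simpa only [dgen, map_mul] using dgen_rel (DRel.braid ⟨i, by omega⟩ ⟨i + 1, h⟩ rfl)

lemma TinvN_mul_XgN_mul_TinvN {i : ℕ} (h : i < k - 1) : T' i * X i * T' i = X (i + 1) := by
  rw [TinvN, XgN, XgN, dif_pos h, dif_pos (by omega), dif_pos (by omega)]
  simpa only [dgen, map_mul] using
    dgen_rel (DRel.TXT ⟨i, h⟩ ⟨i, by omega⟩ ⟨i + 1, by omega⟩ rfl rfl)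

lemma commute_TgN_XgN {i j : ℕ} (h1 : j ≠ i) (h2 : j ≠ i + 1) : Commute (T i) (X j) := by
  unfold TgN XgN
  split_ifs with hi hj
  · exact dgen_commute (DRel.TX ⟨i, hi⟩ ⟨j, hj⟩ h1 h2)
  all_goals simp

lemma commute_XgN_XgN (i j : ℕ) : Commute (X i) (X j) := by
  unfold XgN
  split_ifs with hi hj
  · exact dgen_commute (DRel.XX ⟨i, hi⟩ ⟨j, hj⟩)
  all_goals simp

lemma TgN_mul_YgN_mul_TgN {i : ℕ} (h : i < k - 1) : T i * Y i * T i = Y (i + 1) := by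
  rw [TgN, YgN, YgN, dif_pos h, dif_pos (by omega), dif_pos (by omega)]
  simpa only [dgen, map_mul] using
    dgen_rel (DRel.TYT ⟨i, h⟩ ⟨i, by omega⟩ ⟨i + 1, by omega⟩ rfl rfl)

lemma commute_TgN_YgN {i j : ℕ} (h1 : j ≠ i) (h2 : j ≠ i + 1) : Commute (T i) (Y j) := by
  unfold TgN YgN
  split_ifs with hi hj
  · exact dgen_commute (DRel.TY ⟨i, hi⟩ ⟨j, hj⟩ h1 h2)
  all_goals simp

lemma YgN_mul_TgN_mul_XgN_zero (hk : 0 < k - 1) : Y 0 * T 0 * X 0 = X 1 * Y 0 * T 0 := by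
  rw [TgN, XgN, XgN, YgN, dif_pos hk, dif_pos (by omega), dif_pos (by omega), dif_pos (by omega)]
  simpa only [dgen, map_mul] using
    dgen_rel (DRel.cross ⟨0, hk⟩ ⟨0, by omega⟩ ⟨1, by omega⟩ rfl rfl rfl)

lemma YgN_zero_mul_ascProd_XgN (hk : 0 < k) :
    Y 0 * ascProd X 0 k = 𝔮 * ascProd X 0 k * Y 0 := by
  have hX : ascProd X 0 k = ((List.finRange k).map fun j => dgen (DGen.X j)).prod := by
    rw [ascProd, ← List.range_eq_range', ← List.map_coe_finRange_eq_range, List.map_map]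
    congr 1
    exact List.map_congr_left fun j _ => dif_pos j.isLt
  have hrel := dgen_rel (DRel.det ⟨0, hk⟩ rfl)
  rw [map_mul, map_mul, map_mul, map_list_prod, List.map_map, AlgHom.commutes] at hrel
  rw [hX, YgN, dif_pos hk]
  exact hrel

lemma isUnit_XgN (i : ℕ) : IsUnit (X i) := by
  unfold XgN
  split_ifs with hi
  · refine ⟨⟨_, dgen (DGen.X' ⟨i, hi⟩), ?_, ?_⟩, rfl⟩
    · simpa only [dgen, map_mul, map_one] using dgen_rel (DRel.XX' ⟨i, hi⟩)
    · simpa only [dgen, map_mul, map_one] using dgen_rel (DRel.X'X ⟨i, hi⟩)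
  · exact isUnit_one

lemma commute_TinvN_of_commute {i : ℕ} {x : Hk k} (h : Commute (T i) x) : Commute (T' i) x :=
  Commute.units_inv_left (u := ⟨T i, T' i, TgN_mul_TinvN i, TinvN_mul_TgN i⟩) h

lemma XgN_mul_TinvN {i : ℕ} (h : i < k - 1) : X i * T' i = T i * X (i + 1) := by
  rw [← TinvN_mul_XgN_mul_TinvN h, ← mul_assoc, ← mul_assoc, TgN_mul_TinvN, one_mul]

lemma TgN_mul_XgN_succ_mul_TgN {i : ℕ} (h : i < k - 1) : T i * X (i + 1) * T i = X i := by
  rw [← TinvN_mul_XgN_mul_TinvN h]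
  simp only [mul_assoc, TinvN_mul_TgN, mul_one]
  rw [← mul_assoc, TgN_mul_TinvN, one_mul]

lemma XgN_succ_mul_YgN_zero_mul_ascProd {m : ℕ} (hm : m + 1 < k) :
    X (m + 1) * Y 0 * ascProd T 0 m = Y 0 * ascProd T 0 (m + 1) * T m * X (m + 1) := by
  induction m with
  | zero =>
    have hk : 0 < k - 1 := by omega
    calc X 1 * Y 0 * ascProd T 0 0 = X 1 * Y 0 * T 0 * T' 0 := by
          rw [mul_assoc _ (T 0), TgN_mul_TinvN, ascProd_zero]
      _ = Y 0 * T 0 * (T 0 * X 1 * T 0) * T' 0 := by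
          rw [← YgN_mul_TgN_mul_XgN_zero hk, TgN_mul_XgN_succ_mul_TgN hk]
      _ = Y 0 * ascProd T 0 1 * T 0 * X 1 := by
          simp only [ascProd_succ, ascProd_zero, one_mul, mul_assoc, TgN_mul_TinvN, mul_one]
  | succ m ih =>
    have hm' : m + 1 < k - 1 := by omega
    have hY : Commute (T' (m + 1)) (Y 0) :=
      commute_TinvN_of_commute (commute_TgN_YgN (by omega) (by omega))
    have hI : Commute (T' (m + 1)) (ascProd T 0 m) :=
      commute_TinvN_of_commute (.ascProd_right fun i _ hi => commute_TgN_TgN (by omega))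
    have hX : Commute (T m) (X (m + 1 + 1)) := commute_TgN_XgN (by omega) (by omega)
    have hbraid := TgN_braid hm'
    have hbraid' : T m * T m * T (m + 1) * T m = T (m + 1) * T m * T (m + 1) * T (m + 1) :=
      calc T m * T m * T (m + 1) * T m = T m * (T m * T (m + 1) * T m) := by
            simp only [mul_assoc]
        _ = T m * T (m + 1) * T m * T (m + 1) := by
            conv_lhs => rw [hbraid]
            simp only [mul_assoc]
        _ = T (m + 1) * T m * T (m + 1) * T (m + 1) := by rw [hbraid]
    calc X (m + 1 + 1) * Y 0 * ascProd T 0 (m + 1)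
        = T' (m + 1) * (X (m + 1) * Y 0 * ascProd T 0 m) * (T' (m + 1) * T m) := by
          rw [← TinvN_mul_XgN_mul_TinvN hm', ascProd_succ]
          simp only [mul_assoc, zero_add, hY.left_comm, hI.left_comm]
      _ = Y 0 * ascProd T 0 m * (T' (m + 1) * (T m * T m * (X (m + 1) * T' (m + 1)) * T m)) := by
          rw [ih (by omega), ascProd_succ]
          simp only [mul_assoc, zero_add, hY.left_comm, hI.left_comm]
      _ = Y 0 * ascProd T 0 m * (T' (m + 1) * (T m * T m * T (m + 1) * T m))
            * X (m + 1 + 1) := by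
          rw [XgN_mul_TinvN hm']
          simp only [mul_assoc, hX.eq]
      _ = Y 0 * ascProd T 0 (m + 1 + 1) * T (m + 1) * X (m + 1 + 1) := by
          rw [hbraid']
          simp only [ascProd_succ, zero_add, mul_assoc]
          rw [← mul_assoc (T' (m + 1)), TinvN_mul_TgN, one_mul]

lemma ascProd_XgN_mul_YgN_zero {m : ℕ} (hm : m < k) :
    ascProd X 1 m * Y 0 = Y 0 * (ascProd T 0 m * descProd T 0 m) * ascProd X 1 m := by
  induction m with
  | zero => simp
  | succ m ih =>
    have hX : Commute (X (m + 1)) (ascProd X 1 m) :=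
      .ascProd_right fun _ _ _ => commute_XgN_XgN _ _
    have hD : Commute (X (m + 1)) (descProd T 0 m) :=
      .descProd_right fun _ _ _ => (commute_TgN_XgN (by omega) (by omega)).symm
    calc ascProd X 1 (m + 1) * Y 0 = X (m + 1) * (ascProd X 1 m * Y 0) := by
          rw [ascProd_succ, add_comm 1 m, ← hX.eq, mul_assoc]
      _ = X (m + 1) * Y 0 * ascProd T 0 m * (descProd T 0 m * ascProd X 1 m) := by
          rw [ih (by omega)]
          simp only [mul_assoc]
      _ = Y 0 * (ascProd T 0 (m + 1) * descProd T 0 (m + 1)) * ascProd X 1 (m + 1) := by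
          rw [XgN_succ_mul_YgN_zero_mul_ascProd hm, descProd_succ, ascProd_succ X 1 m,
            add_comm 1 m, ← hX.eq, zero_add]
          simp only [mul_assoc, hD.left_comm]

lemma YgN_zero_mul_XgN_zero (hk : 0 < k) :
    Y 0 * X 0 = 𝔮 * (X 0 * Y 0) * (ascProd T 0 (k - 1) * descProd T 0 (k - 1)) := by
  have hsplit : ascProd X 0 k = X 0 * ascProd X 1 (k - 1) := by
    simpa only [Nat.sub_add_cancel hk, zero_add] using ascProd_succ' X 0 (k - 1)
  have hdet := YgN_zero_mul_ascProd_XgN hk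
  rw [hsplit] at hdet
  refine (isUnit_ascProd (lo := 1) (n := k - 1) isUnit_XgN).mul_right_cancel ?_
  calc Y 0 * X 0 * ascProd X 1 (k - 1) = 𝔮 * X 0 * (ascProd X 1 (k - 1) * Y 0) := by
        rw [mul_assoc, hdet]
        simp only [mul_assoc]
    _ = _ := by
        rw [ascProd_XgN_mul_YgN_zero (by omega)]
        simp only [mul_assoc]

lemma YgN_mul_XgN_succ {a : ℕ} (h : a < k - 1) :
    Y (a + 1) * X (a + 1) = T a * (Y a * X a) * T' a := by
  rw [← TgN_mul_YgN_mul_TgN h, ← TinvN_mul_XgN_mul_TinvN h]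
  simp only [mul_assoc]
  rw [← mul_assoc (T a) (T' a), TgN_mul_TinvN, one_mul]

lemma TgN_mul_XgN_mul_YgN_mul_TgN {a : ℕ} (h : a < k - 1) :
    T a * (X a * Y a) * T a = X (a + 1) * Y (a + 1) + 𝔥 * (X a * Y a * T a) := by
  have hXY : X (a + 1) * Y (a + 1) = T' a * (X a * Y a) * T a := by
    rw [← TinvN_mul_XgN_mul_TinvN h, ← TgN_mul_YgN_mul_TgN h]
    simp only [mul_assoc]
    rw [← mul_assoc (T' a) (T a), TinvN_mul_TgN, one_mul]
  rw [hXY, TinvN_eq h, sub_mul, sub_mul, mul_assoc 𝔥, sub_add_cancel]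

variable (k) in
def xyPart (a : ℕ) : Hk k :=
  X a * Y a + 𝔥 * ∑ i ∈ Finset.range a, X i * Y i * palT k i (a - 1)

lemma TgN_mul_xyPart_mul_TgN {a : ℕ} (h : a < k - 1) :
    T a * xyPart k a * T a = xyPart k (a + 1) := by
  have hterm : ∀ i ∈ Finset.range a,
      T a * (X i * Y i * palT k i (a - 1)) * T a = X i * Y i * palT k i a := by
    intro i hi
    rw [Finset.mem_range] at hi
    obtain ⟨b, rfl⟩ : ∃ b, a = b + 1 := ⟨a - 1, by omega⟩
    have hX : Commute (T (b + 1)) (X i) := commute_TgN_XgN (by omega) (by omega)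
    have hY : Commute (T (b + 1)) (Y i) := commute_TgN_YgN (by omega) (by omega)
    rw [Nat.add_sub_cancel, palT, palT, ← palProd, ← palProd, palProd_succ _ (by omega)]
    simp only [mul_assoc, hX.left_comm, hY.left_comm]
  rw [xyPart, xyPart, mul_add, add_mul, TgN_mul_XgN_mul_YgN_mul_TgN h, Algebra.left_comm,
    mul_assoc 𝔥, Finset.mul_sum, Finset.sum_mul, Finset.sum_congr rfl hterm,
    Finset.sum_range_succ, Nat.add_sub_cancel, palT, ← palProd, palProd_self, mul_add, add_assoc,
    add_comm (𝔥 * _)]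

lemma YgN_mul_XgN_eq {a : ℕ} (ha : a < k) :
    Y a * X a = 𝔮 * xyPart k a * (ascProd T a (k - 1 - a) * descProd T a (k - 1 - a)) := by
  induction a with
  | zero => simpa [xyPart, mul_assoc] using YgN_zero_mul_XgN_zero (by omega)
  | succ a ih =>
    have h : a < k - 1 := by omega
    obtain ⟨n, hn⟩ : ∃ n, k - 1 - a = n + 1 := ⟨k - 1 - (a + 1), by omega⟩
    rw [YgN_mul_XgN_succ h, ih (by omega), hn, ascProd_succ', descProd_succ',
      ← TgN_mul_xyPart_mul_TgN h, show k - 1 - (a + 1) = n by omega]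
    simp only [mul_assoc, TgN_mul_TinvN, mul_one, Algebra.left_comm]

end DAHA

/-- `a : ℕ` with `a < k` is the 0-based index (paper index `a + 1`). In the 0-based encoding, the
paper term for `i = ι + 1 ≤ a − 1` is `X_ιY_ι·palT ι (a−1)` and the paper term for
`p = (a+1) + j ∈ {a, …, k−1}` (with `j ∈ {0, …, k−2−a}` 0-based, i.e. `j < k − 1 − a`) is
`palT a (a+j)`. -/
theorem statement7_general (k : ℕ) (a : ℕ) (ha : a < k) :
    YgN k a * XgN k a =
      algebraMap K2 (Hk k) qvar *
        (XgN k a * YgN k a +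
          algebraMap K2 (Hk k) hvar *
            ∑ i ∈ Finset.range a, XgN k i * YgN k i * palT k i (a - 1)) *
        (1 + algebraMap K2 (Hk k) hvar *
          ∑ j ∈ Finset.range (k - 1 - a), palT k a (a + j)) := by
  rw [YgN_mul_XgN_eq ha, ascProd_mul_descProd_eq_one_add_sum (f := TgN k) hvar
    (fun i _ hi => TgN_mul_self (by omega)) (fun i _ hi => TgN_braid (by omega))
    (fun i j _ hij _ => commute_TgN_TgN (i := i) (j := j) (.inl hij))]
  rfl

/-- In `H_k` (`k ≥ 2`), for every `1 ≤ a ≤ k` (paper index; below `a : ℕ` with `a < k` is the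
0-based index, paper index `a + 1`):
`Y_aX_a = q·(X_aY_a + h·∑_{i=1}^{a−1} X_iY_i·T_{(i,a)})·(1 + h·∑_{p=a}^{k−1} T_{(a,p+1)})`,
where `T_{(c,d)} = T_{d−1}⋯T_{c+1}T_cT_{c+1}⋯T_{d−1}` and empty sums are `0`.
In the 0-based encoding, the paper term for `i = ι + 1 ≤ a − 1` is
`X_ιY_ι·palT ι (a−1)` and the paper term for `p = (a+1) + j ∈ {a, …, k−1}` (with
`j ∈ {0, …, k−2−a}` 0-based, i.e. `j < k − 1 − a`) is `palT a (a+j)`. -/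
theorem statement7 (k : ℕ) (hk : 2 ≤ k) (a : ℕ) (ha : a < k) :
    YgN k a * XgN k a =
      algebraMap K2 (Hk k) qvar *
        (XgN k a * YgN k a +
          algebraMap K2 (Hk k) hvar *
            ∑ i ∈ Finset.range a, XgN k i * YgN k i * palT k i (a - 1)) *
        (1 + algebraMap K2 (Hk k) hvar *
          ∑ j ∈ Finset.range (k - 1 - a), palT k a (a + j)) :=
  statement7_general k a ha

end
end

section
/- The family of almost symmetric monomials m_{(λ|μ)}, indexed over all pairs consisting of a strict composition λ and a partition μ, is linearly independent over K in MvPowerSeries ℕ K. -/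
/-!
Almost symmetric monomials in `MvPowerSeries ℕ K`.
-/

noncomputable section

/-- A strict composition: a finite tuple of nonnegative integers whose last entry (if any)
is positive. -/
def StrictComp : Type := {l : List ℕ // ∀ h : l ≠ [], l.getLast h ≠ 0}

/-- A partition: a weakly decreasing finite tuple of positive integers. -/
def PartitionL : Type := {l : List ℕ // l.Pairwise (· ≥ ·) ∧ ∀ x ∈ l, 0 < x}

open Classical in
/-- The almost symmetric monomial `m_{(λ|μ)}`: its coefficient at an exponent `d : ℕ →₀ ℕ`
is `1` if `d_i = λ_i` for all `i < ℓ(λ)` and the multiset of nonzero values `d_j`, `j ≥ ℓ(λ)`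
(with multiplicity), equals the multiset of parts of `μ`; and `0` otherwise. -/
def asm (K : Type*) [Field K] (lam mu : List ℕ) : MvPowerSeries ℕ K :=
  fun d : ℕ →₀ ℕ =>
    if (∀ i : ℕ, ∀ h : i < lam.length, d i = lam.get ⟨i, h⟩) ∧
        (d.support.filter (fun j => lam.length ≤ j)).val.map d = (↑mu : Multiset ℕ) then
      (1 : K)
    else 0

/-!
Put `d = (λ_0, …, λ_{ℓ-1}, 0, …, 0, μ_0, μ_1, …)` with `k` zeros in the middle. Once `k` is at least
the length of every `λ'` occurring in a given finite linear relation, the coefficient of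
`m_{(λ'|μ')}` at `d` vanishes unless `ℓ(λ') < ℓ(λ)` or `(λ', μ') = (λ, μ)`: a longer `λ'` would
need its nonzero last entry inside the block of zeros, a `λ'` of the same length must be `λ`, and
then `μ'` is a rearrangement of `μ`, hence equal to it since both are sorted. So the family is
unitriangular with respect to `ℓ(λ)`: in a linear relation, taking `(λ, μ)` with `ℓ(λ)` minimal
among the terms with nonzero coefficient, the coefficient at `d` of the relation is that
coefficient itself, which therefore vanishes.
-/

theorem linearIndependent_of_triangular {ι R M α : Type*} [Ring R] [NoZeroDivisors R]
    [AddCommGroup M] [Module R M] [LinearOrder α] {v : ι → M} (rank : ι → α)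
    (h : ∀ s : Finset ι, ∀ i ∈ s, ∃ φ : M →ₗ[R] R, φ (v i) ≠ 0 ∧
      ∀ j ∈ s, j ≠ i → rank i ≤ rank j → φ (v j) = 0) :
    LinearIndependent R v := by
  classical
  rw [linearIndependent_iff']
  intro s g hsum i hi
  by_contra hgi
  obtain ⟨j, hj, hmin⟩ :=
    (s.filter (g · ≠ 0)).exists_min_image rank ⟨i, Finset.mem_filter.2 ⟨hi, hgi⟩⟩
  rw [Finset.mem_filter] at hj
  obtain ⟨φ, hφj, hφ⟩ := h s j hj.1
  have hφsum : φ (∑ k ∈ s, g k • v k) = g j * φ (v j) := by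
    rw [map_sum, Finset.sum_eq_single_of_mem j hj.1, map_smul, smul_eq_mul]
    intro k hk hkj
    by_cases hgk : g k = 0
    · rw [hgk, zero_smul, map_zero]
    · rw [map_smul, hφ k hk hkj (hmin k (Finset.mem_filter.2 ⟨hk, hgk⟩)), smul_zero]
  rw [hsum, map_zero] at hφsum
  exact mul_ne_zero hj.2 hφj hφsum.symm

namespace List

variable {M : Type*} [Zero M]

theorem map_getD_range_length (l : List M) : (range l.length).map (l.getD · 0) = l := by
  refine ext_getElem (by simp) fun i _ hi => ?_
  simp [getElem?_eq_getElem hi]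

theorem toFinsupp_support_val_map [DecidableEq M] (l : List M) :
    l.toFinsupp.support.val.map l.toFinsupp = (l.filter (· ≠ 0) : Multiset M) := by
  rw [toFinsupp_support, Finset.filter_val, coe_toFinsupp]
  calc _ = ((Finset.range l.length).val.map (l.getD · 0)).filter (· ≠ 0) :=
        (Multiset.filter_map _ _ _).symm
    _ = _ := by
      rw [Finset.range_val, ← Multiset.coe_range, Multiset.map_coe, map_getD_range_length,
        Multiset.filter_coe]

theorem toFinsupp_append_support_filter_val_map [DecidableEq M] (a b : List M) :
    ((a ++ b).toFinsupp.support.filter (a.length ≤ ·)).val.map (a ++ b).toFinsupp =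
      (b.filter (· ≠ 0) : Multiset M) := by
  have hshift (k : ℕ) : (a ++ b).toFinsupp (a.length + k) = b.toFinsupp k := by
    simp [getElem?_append_right]
  have hsupp : (a ++ b).toFinsupp.support.filter (a.length ≤ ·) =
      b.toFinsupp.support.map (addLeftEmbedding a.length) := by
    ext j
    simp only [Finset.mem_filter, Finsupp.mem_support_iff, Finset.mem_map]
    constructor
    · rintro ⟨hj, hle⟩
      obtain ⟨k, rfl⟩ := Nat.exists_eq_add_of_le hle
      exact ⟨k, hshift k ▸ hj, rfl⟩
    · rintro ⟨k, hk, rfl⟩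
      exact ⟨hshift k ▸ hk, Nat.le_add_right _ _⟩
  rw [hsupp, Finset.map_val, Multiset.map_map, ← toFinsupp_support_val_map]
  exact Multiset.map_congr rfl fun k _ => hshift k

end List

section AlmostSymmetric

variable {K : Type*} [Field K]

theorem asm_apply_ne_zero_iff {lam mu : List ℕ} {d : ℕ →₀ ℕ} :
    asm K lam mu d ≠ 0 ↔ (∀ i (h : i < lam.length), d i = lam[i]) ∧
      (d.support.filter (lam.length ≤ ·)).val.map d = (mu : Multiset ℕ) := by
  unfold asm
  split_ifs with h
  · simpa using h
  · simpa using h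

def paddedExponent (lam mu : List ℕ) (k : ℕ) : ℕ →₀ ℕ :=
  (lam ++ (List.replicate k 0 ++ mu)).toFinsupp

theorem paddedExponent_apply_of_lt {lam mu : List ℕ} {k i : ℕ} (hi : i < lam.length) :
    paddedExponent lam mu k i = lam[i] := by
  simp only [paddedExponent, List.toFinsupp_apply]
  rw [List.getD_append _ _ _ _ hi, List.getD_eq_getElem _ _ hi]

theorem paddedExponent_apply_of_le_of_lt {lam mu : List ℕ} {k i : ℕ} (h₁ : lam.length ≤ i)
    (h₂ : i < lam.length + k) : paddedExponent lam mu k i = 0 := by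
  simp only [paddedExponent, List.toFinsupp_apply]
  have hk : i - lam.length < k := by omega
  rw [List.getD_append_right _ _ _ _ h₁, List.getD_append _ _ _ _ (by simpa using hk),
    List.getD_replicate _ hk]

theorem paddedExponent_tail (lam : List ℕ) (mu : PartitionL) (k : ℕ) :
    ((paddedExponent lam mu.1 k).support.filter (lam.length ≤ ·)).val.map
      (paddedExponent lam mu.1 k) = (mu.1 : Multiset ℕ) := by
  rw [paddedExponent, List.toFinsupp_append_support_filter_val_map, List.filter_append,
    List.filter_eq_nil_iff.2 (by simp),
    List.filter_eq_self.2 (by simpa [pos_iff_ne_zero] using mu.2.2)]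
  rfl

theorem asm_paddedExponent_self_ne_zero (lam : List ℕ) (mu : PartitionL) (k : ℕ) :
    asm K lam mu.1 (paddedExponent lam mu.1 k) ≠ 0 :=
  asm_apply_ne_zero_iff.2 ⟨fun _ hi => paddedExponent_apply_of_lt hi, paddedExponent_tail lam mu k⟩

theorem length_le_of_asm_paddedExponent_ne_zero {lam' mu' lam mu : List ℕ} {k : ℕ}
    (hlast : ∀ h : lam' ≠ [], lam'.getLast h ≠ 0) (hk : lam'.length ≤ lam.length + k)
    (h : asm K lam' mu' (paddedExponent lam mu k) ≠ 0) : lam'.length ≤ lam.length := by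
  obtain ⟨hd, -⟩ := asm_apply_ne_zero_iff.1 h
  by_contra! hlt
  have hne : lam' ≠ [] := List.ne_nil_of_length_pos (by omega)
  apply hlast hne
  rw [List.getLast_eq_getElem, ← hd _ (by omega)]
  exact paddedExponent_apply_of_le_of_lt (by omega) (by omega)

theorem length_lt_or_eq_of_asm_paddedExponent_ne_zero {lam' : StrictComp} {mu' mu : PartitionL}
    {lam : List ℕ} {k : ℕ} (hk : lam'.1.length ≤ k)
    (h : asm K lam'.1 mu'.1 (paddedExponent lam mu.1 k) ≠ 0) :
    lam'.1.length < lam.length ∨ lam'.1 = lam ∧ mu'.1 = mu.1 := by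
  rcases (length_le_of_asm_paddedExponent_ne_zero lam'.2 (by omega) h).lt_or_eq with hlt | hlen
  · exact Or.inl hlt
  obtain ⟨hd, htail⟩ := asm_apply_ne_zero_iff.1 h
  have hlam : lam'.1 = lam :=
    List.ext_getElem hlen fun i hi _ => by rw [← hd i hi, paddedExponent_apply_of_lt]
  rw [hlam, paddedExponent_tail] at htail
  exact Or.inr ⟨hlam, (Multiset.coe_eq_coe.1 htail.symm).eq_of_pairwise' mu'.2.1 mu.2.1⟩

end AlmostSymmetric

/-- The family of almost symmetric monomials `m_{(λ|μ)}`, indexed over all pairs of a strict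
composition `λ` and a partition `μ`, is linearly independent over `K` in
`MvPowerSeries ℕ K`. -/
theorem statement10 (K : Type*) [Field K] :
    LinearIndependent K (fun p : StrictComp × PartitionL => asm K p.1.1 p.2.1) := by
  refine linearIndependent_of_triangular (fun p => p.1.1.length) fun s p _ => ?_
  let k := s.sup fun q => q.1.1.length
  refine ⟨MvPowerSeries.coeff (paddedExponent p.1.1 p.2.1 k),
    asm_paddedExponent_self_ne_zero p.1.1 p.2 k, fun q hq hqp hle => ?_⟩
  by_contra hne
  rcases length_lt_or_eq_of_asm_paddedExponent_ne_zero
      (Finset.le_sup (f := fun q : StrictComp × PartitionL => q.1.1.length) hq) hne with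
    hlt | ⟨hlam, hmu⟩
  · exact absurd hle hlt.not_ge
  · exact hqp (Prod.ext (Subtype.ext hlam) (Subtype.ext hmu))

end
end

section
/- Let f ∈ MvPowerSeries ℕ K be such that (bounded degree) there exists D with ∑_i d_i ≤ D for every exponent d with coeff_f(d) ≠ 0, and (almost symmetric of level k) there exists k ≥ 0 such that for every i ≥ k and every exponent d one has coeff_f(d ∘ σ_i) = coeff_f(d), where σ_i is the transposition of ℕ exchanging i and i+1. Then f is a finite K-linear combination of almost symmetric monomials m_{(λ|μ)}, and moreover one can take all the strict compositions λ occurring to have length at most k. -/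
/-!
Call `(d_0, …, d_{k-1})` the head and the multiset of nonzero values `d_j`, `j ≥ k`, the tail of
an exponent `d`. Invariance under the adjacent transpositions beyond `k` gives invariance under
all transpositions of indices `≥ k`; swapping a suitable tail value into position `k` and then
raising `k` by one shows that the coefficients of `f` depend only on the head and tail of `d`.
Bounded degree leaves finitely many (head, tail) pairs, so `f` is a finite combination of the
indicators `E_k(l, m)` of the exponents with head `l` and tail `m`. Finally, by induction on `k`,
`E_k(l, m)` lies in the span of the `m_{(λ|μ)}` with `ℓ(λ) ≤ k`: if the last entry of `l` is
nonzero then `E_k(l, m) = m_{(l|m)}`, and otherwise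
`E_k(l' ++ [0], m) = E_{k-1}(l', m) - ∑_{a ∈ m} E_k(l' ++ [a], m - {a})`.
-/

noncomputable section

open MvPowerSeries

def expHead (k : ℕ) (d : ℕ →₀ ℕ) : List ℕ := List.ofFn fun i : Fin k => d i

def expTail (k : ℕ) (d : ℕ →₀ ℕ) : Multiset ℕ := ((d.support.filter (k ≤ ·)).val).map d

def headTail (k : ℕ) (d : ℕ →₀ ℕ) : List ℕ × Multiset ℕ := (expHead k d, expTail k d)

def headTailIndicator (K : Type*) [Field K] (k : ℕ) (x : List ℕ × Multiset ℕ) :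
    MvPowerSeries ℕ K :=
  fun d => if headTail k d = x then 1 else 0

section HeadTail

variable {k : ℕ} {d d' : ℕ →₀ ℕ}

theorem expHead_succ (k : ℕ) (d : ℕ →₀ ℕ) : expHead (k + 1) d = expHead k d ++ [d k] := by
  rw [expHead, List.ofFn_succ', List.concat_eq_append]
  rfl

theorem apply_eq_of_expHead_eq (h : expHead k d = expHead k d') {i : ℕ} (hi : i < k) :
    d i = d' i :=
  congrFun (List.ofFn_inj.mp h) ⟨i, hi⟩

theorem mem_expTail {v : ℕ} : v ∈ expTail k d ↔ ∃ p, d p = v ∧ k ≤ p ∧ d p ≠ 0 := by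
  simp [expTail, and_comm]

theorem zero_notMem_expTail : 0 ∉ expTail k d := fun h => by
  obtain ⟨p, hp, -, hp0⟩ := mem_expTail.mp h
  exact hp0 hp

theorem expTail_of_apply_eq_zero (h : d k = 0) : expTail k d = expTail (k + 1) d := by
  rw [expTail, expTail]
  congr 2
  ext j
  simp only [Finset.mem_filter, Finsupp.mem_support_iff]
  grind

theorem expTail_of_apply_ne_zero (h : d k ≠ 0) : expTail k d = d k ::ₘ expTail (k + 1) d := by
  have hsupp : d.support.filter (k ≤ ·) = insert k (d.support.filter (k + 1 ≤ ·)) := by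
    ext j
    simp only [Finset.mem_filter, Finset.mem_insert, Finsupp.mem_support_iff]
    grind
  rw [expTail, hsupp, Finset.insert_val_of_notMem (by simp), Multiset.map_cons]
  rfl

theorem expTail_succ_eq (h : expTail k d = expTail k d') (hk : d k = d' k) :
    expTail (k + 1) d = expTail (k + 1) d' := by
  by_cases h0 : d k = 0
  · have h0' : d' k = 0 := hk ▸ h0
    rwa [expTail_of_apply_eq_zero h0, expTail_of_apply_eq_zero h0'] at h
  · have h0' : d' k ≠ 0 := hk ▸ h0
    rw [expTail_of_apply_ne_zero h0, expTail_of_apply_ne_zero h0', hk] at h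
    exact Multiset.cons_inj_right _ |>.mp h

theorem headTail_succ_eq (h : headTail k d = headTail k d') (hk : d k = d' k) :
    headTail (k + 1) d = headTail (k + 1) d' := by
  simp only [headTail, Prod.mk.injEq] at h ⊢
  rw [expHead_succ, expHead_succ, h.1, hk]
  exact ⟨rfl, expTail_succ_eq h.2 hk⟩

theorem headTail_equivMapDomain_swap {p q : ℕ} (hp : k ≤ p) (hq : k ≤ q) (d : ℕ →₀ ℕ) :
    headTail k (Finsupp.equivMapDomain (Equiv.swap p q) d) = headTail k d := by
  have hswap : ∀ j, k ≤ Equiv.swap p q j ↔ k ≤ j := by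
    intro j
    rw [Equiv.swap_apply_def]
    split_ifs <;> omega
  refine Prod.ext ?_ ?_
  · refine List.ofFn_inj.mpr (funext fun i => ?_)
    rw [Finsupp.equivMapDomain_apply, Equiv.symm_swap,
      Equiv.swap_apply_of_ne_of_ne (by omega) (by omega)]
  · change ((d.support.map (Equiv.swap p q).toEmbedding).filter (k ≤ ·)).val.map
        (fun j => d ((Equiv.swap p q).symm j)) = expTail k d
    rw [Finset.filter_map, Finset.map_val, Multiset.map_map, expTail]
    refine Multiset.map_congr (congrArg _ (Finset.filter_congr fun j _ => hswap j)) fun j _ => ?_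
    simp

end HeadTail

section Invariance

variable {α : Type*} {c : (ℕ →₀ ℕ) → α} {k : ℕ}

theorem swap_invariant_of_adjacent
    (hc : ∀ i, k ≤ i → ∀ d, c (Finsupp.equivMapDomain (Equiv.swap i (i + 1)) d) = c d)
    {p q : ℕ} (hp : k ≤ p) (hq : k ≤ q) (d : ℕ →₀ ℕ) :
    c (Finsupp.equivMapDomain (Equiv.swap p q) d) = c d := by
  have of_lt : ∀ p, k ≤ p → ∀ q, p < q → ∀ d,
      c (Finsupp.equivMapDomain (Equiv.swap p q) d) = c d := by
    intro p hp q hpq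
    induction q, hpq using Nat.le_induction with
    | base => exact hc p hp
    | succ q hpq ih =>
      intro d
      have hconj : Equiv.swap p (q + 1)
          = (Equiv.swap q (q + 1)).trans ((Equiv.swap p q).trans (Equiv.swap q (q + 1))) := by
        ext x
        simp only [Equiv.trans_apply, Equiv.swap_apply_def]
        split_ifs <;> omega
      rw [hconj, Finsupp.equivMapDomain_trans, Finsupp.equivMapDomain_trans, hc q (by omega),
        ih, hc q (by omega)]
  rcases lt_trichotomy p q with h | rfl | h
  · exact of_lt p hp q h d
  · rw [Equiv.swap_self, Finsupp.equivMapDomain_refl]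
  · rw [Equiv.swap_comm]
    exact of_lt q hq p h d

theorem eq_of_headTail_eq_of_vanishing (n : ℕ) :
    ∀ {k : ℕ}, (∀ p q, k ≤ p → k ≤ q → ∀ d, c (Finsupp.equivMapDomain (Equiv.swap p q) d) = c d) →
      ∀ {d d' : ℕ →₀ ℕ}, (∀ i, k + n ≤ i → d i = 0) → (∀ i, k + n ≤ i → d' i = 0) →
        headTail k d = headTail k d' → c d = c d' := by
  induction n with
  | zero =>
    intro k _ d d' hd hd' h
    congr 1
    ext i
    rcases lt_or_ge i k with hi | hi
    · exact apply_eq_of_expHead_eq (congrArg Prod.fst h) hi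
    · rw [hd i hi, hd' i hi]
  | succ n ih =>
    intro k hc d d' hd hd' h
    wlog hk : d k = d' k ∨ d' k ≠ 0 generalizing d d'
    · exact (this hd' hd h.symm (by omega)).symm
    obtain ⟨d₂, hcd₂, hd₂, hd₂k, hd₂d⟩ : ∃ d₂, c d₂ = c d ∧ (∀ i, k + 1 + n ≤ i → d₂ i = 0) ∧
        d₂ k = d' k ∧ headTail k d₂ = headTail k d := by
      rcases hk with hk | hk
      · exact ⟨d, rfl, fun i hi => hd i (by omega), hk, rfl⟩
      -- move an occurrence of the value `d' k` in the tail of `d` to position `k`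
      have hmem : d' k ∈ expTail k d := by
        rw [show expTail k d = expTail k d' from congrArg Prod.snd h]
        exact mem_expTail.mpr ⟨k, rfl, le_rfl, hk⟩
      obtain ⟨p, hpv, hkp, hp0⟩ := mem_expTail.mp hmem
      have hp : p < k + (n + 1) := by
        by_contra hp
        exact hp0 (hd p (by omega))
      refine ⟨Finsupp.equivMapDomain (Equiv.swap k p) d, hc k p le_rfl hkp d, fun i hi => ?_, ?_,
        headTail_equivMapDomain_swap le_rfl hkp d⟩
      · rw [Finsupp.equivMapDomain_apply, Equiv.symm_swap,
          Equiv.swap_apply_of_ne_of_ne (by omega) (by omega)]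
        exact hd i (by omega)
      · rw [Finsupp.equivMapDomain_apply, Equiv.symm_swap, Equiv.swap_apply_left, hpv]
    rw [← hcd₂]
    exact ih (fun p q hp hq => hc p q (by omega) (by omega)) hd₂ (fun i hi => hd' i (by omega))
      (headTail_succ_eq (hd₂d.trans h) hd₂k)

theorem factorsThrough_headTail
    (hc : ∀ i, k ≤ i → ∀ d, c (Finsupp.equivMapDomain (Equiv.swap i (i + 1)) d) = c d) :
    Function.FactorsThrough c (headTail k) := by
  intro d d' h
  obtain ⟨N, hN⟩ := (d.support ∪ d'.support).exists_nat_subset_range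
  have vanishing : ∀ e : ℕ →₀ ℕ, e.support ⊆ d.support ∪ d'.support → ∀ i, k + N ≤ i → e i = 0 := by
    intro e he i hi
    by_contra hei
    have := Finset.mem_range.mp (hN (he (Finsupp.mem_support_iff.mpr hei)))
    omega
  exact eq_of_headTail_eq_of_vanishing N (fun p q hp hq => swap_invariant_of_adjacent hc hp hq)
    (vanishing d Finset.subset_union_left) (vanishing d' Finset.subset_union_right) h

end Invariance

theorem finite_headTail_of_degree_le (k D : ℕ) :
    {x | ∃ d : ℕ →₀ ℕ, d.degree ≤ D ∧ headTail k d = x}.Finite := by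
  have heads : (List.ofFn '' Set.univ.pi fun _ : Fin k => Set.Iic D).Finite :=
    (Set.Finite.pi fun _ => Set.finite_Iic D).image _
  have tails : (⋃ n ∈ Set.Iic D, Set.range (Nat.Partition.parts (n := n))).Finite :=
    (Set.finite_Iic D).biUnion fun n _ => Set.finite_range _
  refine (heads.prod tails).subset ?_
  rintro _ ⟨d, hd, rfl⟩
  refine ⟨⟨fun i => d i, fun i _ => (Finsupp.le_degree _ d).trans hd, rfl⟩, ?_⟩
  have hsum : (expTail k d).sum ≤ D := calc
    (expTail k d).sum = ∑ j ∈ d.support.filter (k ≤ ·), d j := (Finset.sum_eq_multiset_sum _ _).symm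
    _ ≤ d.degree := Finset.sum_le_sum_of_subset (Finset.filter_subset _ _)
    _ ≤ D := hd
  exact Set.mem_biUnion (Set.mem_Iic.mpr hsum)
    ⟨⟨expTail k d, fun hi => Nat.pos_of_ne_zero (ne_of_mem_of_not_mem hi zero_notMem_expTail),
      rfl⟩, rfl⟩

section Span

variable {K : Type*} [Field K]

theorem coeff_headTailIndicator (k : ℕ) (x : List ℕ × Multiset ℕ) (d : ℕ →₀ ℕ) :
    coeff d (headTailIndicator K k x) = if headTail k d = x then 1 else 0 := rfl

theorem mem_span_headTailIndicator (f : MvPowerSeries ℕ K) (k : ℕ)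
    (hf : Function.FactorsThrough (fun d => coeff d f) (headTail k))
    (hfin : {x | ∃ d, coeff d f ≠ 0 ∧ headTail k d = x}.Finite) :
    f ∈ Submodule.span K (Set.range fun d => headTailIndicator K k (headTail k d)) := by
  classical
  set c := Function.extend (headTail k) (fun d => coeff d f) 0
  have hf_eq : f = ∑ x ∈ hfin.toFinset, c x • headTailIndicator K k x := by
    ext d
    simp only [map_sum, map_smul, coeff_headTailIndicator, smul_eq_mul, mul_ite, mul_one,
      mul_zero, Finset.sum_ite_eq, Set.Finite.mem_toFinset]
    split_ifs with hd
    · exact (hf.extend_apply 0 d).symm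
    · by_contra hne
      exact hd ⟨d, hne, rfl⟩
  rw [hf_eq]
  refine Submodule.sum_smul_mem _ _ fun x hx => Submodule.subset_span ?_
  obtain ⟨d, -, rfl⟩ := hfin.mem_toFinset.mp hx
  exact ⟨d, rfl⟩

theorem headTailIndicator_eq_add_sum (k : ℕ) (l : List ℕ) {m : Multiset ℕ} (hm : 0 ∉ m) :
    headTailIndicator K k (l, m) = headTailIndicator K (k + 1) (l ++ [0], m)
      + ∑ a ∈ m.toFinset, headTailIndicator K (k + 1) (l ++ [a], m.erase a) := by
  classical
  ext d
  have hsucc : ∀ a m', headTail (k + 1) d = (l ++ [a], m') ↔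
      expHead k d = l ∧ d k = a ∧ expTail (k + 1) d = m' := by
    intro a m'
    simp only [headTail, expHead_succ, Prod.mk.injEq, List.append_singleton_inj, and_assoc]
  simp only [map_add, map_sum, coeff_headTailIndicator, hsucc]
  simp only [headTail, Prod.mk.injEq]
  by_cases h0 : d k = 0
  · have hsum : ∀ a ∈ m.toFinset,
        (if expHead k d = l ∧ d k = a ∧ expTail (k + 1) d = m.erase a then (1 : K) else 0) = 0 :=
      fun a ha => if_neg fun ⟨_, hka, _⟩ => hm (h0 ▸ hka ▸ Multiset.mem_toFinset.mp ha)
    rw [Finset.sum_eq_zero hsum, expTail_of_apply_eq_zero h0]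
    simp [h0]
  · have hcons : ∀ t, d k ::ₘ t = m ↔ d k ∈ m ∧ t = m.erase (d k) := fun t => by
      rw [← Multiset.singleton_add, add_comm, Multiset.add_singleton_eq_iff]
    have hsum : ∀ a ∈ m.toFinset,
        (if expHead k d = l ∧ d k = a ∧ expTail (k + 1) d = m.erase a then (1 : K) else 0) =
          if d k = a then (if expHead k d = l ∧ expTail (k + 1) d = m.erase (d k) then 1 else 0)
          else 0 := by
      intro a _
      by_cases ha : d k = a
      · subst ha; simp
      · simp [ha]
    rw [Finset.sum_congr rfl hsum, Finset.sum_ite_eq, expTail_of_apply_ne_zero h0]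
    by_cases hv : d k ∈ m <;> simp [h0, hv, hcons]

end Span

theorem asm_eq_headTailIndicator (K : Type*) [Field K] (lam mu : List ℕ) :
    asm K lam mu = headTailIndicator K lam.length (lam, ↑mu) := by
  funext d
  refine if_congr ?_ rfl rfl
  rw [headTail, Prod.mk.injEq]
  refine and_congr ?_ Iff.rfl
  rw [expHead, List.ext_getElem_iff]
  simp

def asmSpan (K : Type*) [Field K] (k : ℕ) : Submodule K (MvPowerSeries ℕ K) :=
  Submodule.span K
    { g : MvPowerSeries ℕ K | ∃ (lam : StrictComp) (mu : PartitionL),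
        lam.1.length ≤ k ∧ g = asm K lam.1 mu.1 }

section AsmSpan

variable {K : Type*} [Field K]

theorem asmSpan_mono : Monotone (asmSpan K) := fun _ _ hk =>
  Submodule.span_mono fun _ ⟨lam, mu, hlam, hg⟩ => ⟨lam, mu, hlam.trans hk, hg⟩

theorem headTailIndicator_mem_asmSpan_of_getLast_ne_zero {k j : ℕ} {l : List ℕ} {m : Multiset ℕ}
    (hl : ∀ h : l ≠ [], l.getLast h ≠ 0) (hlj : l.length = j) (hjk : j ≤ k) (hm : 0 ∉ m) :
    headTailIndicator K j (l, m) ∈ asmSpan K k := by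
  subst hlj
  refine Submodule.subset_span ⟨⟨l, hl⟩, ⟨m.sort (· ≥ ·), m.pairwise_sort _, fun x hx => ?_⟩,
    hjk, by rw [asm_eq_headTailIndicator, Multiset.sort_eq]⟩
  exact Nat.pos_of_ne_zero (ne_of_mem_of_not_mem ((m.mem_sort _).mp hx) hm)

theorem headTailIndicator_mem_asmSpan (k : ℕ) :
    ∀ {l : List ℕ} {m : Multiset ℕ}, l.length = k → 0 ∉ m →
      headTailIndicator K k (l, m) ∈ asmSpan K k := by
  induction k with
  | zero =>
    intro l m hl hm
    exact headTailIndicator_mem_asmSpan_of_getLast_ne_zero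
      (fun h => absurd (List.length_eq_zero_iff.mp hl) h) hl le_rfl hm
  | succ k ih =>
    intro l m hl hm
    obtain ⟨l, a, rfl⟩ : ∃ l' a, l = l' ++ [a] :=
      (l.eq_nil_or_concat').resolve_left (by rintro rfl; simp at hl)
    have hlk : l.length = k := by simpa using hl
    have strict : ∀ {b m'}, b ≠ 0 → 0 ∉ m' →
        headTailIndicator K (k + 1) (l ++ [b], m') ∈ asmSpan K (k + 1) := fun hb hm' =>
      headTailIndicator_mem_asmSpan_of_getLast_ne_zero (by simpa using hb) (by simpa using hlk)
        le_rfl hm'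
    rcases eq_or_ne a 0 with rfl | ha
    · rw [eq_sub_of_add_eq (headTailIndicator_eq_add_sum (K := K) k l hm).symm]
      refine Submodule.sub_mem _ (asmSpan_mono k.le_succ (ih hlk hm)) (Submodule.sum_mem _ ?_)
      intro b hb
      have hb := Multiset.mem_toFinset.mp hb
      exact strict (ne_of_mem_of_not_mem hb hm) fun h => hm (Multiset.mem_of_mem_erase h)
    · exact strict ha hm

end AsmSpan

/-- Let `f ∈ MvPowerSeries ℕ K` have bounded total degree and be almost symmetric of level
`k` (i.e. invariant under the transpositions `σ_i = (i, i+1)` of the variables for all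
`i ≥ k`).  Then `f` lies in the `K`-linear span of the almost symmetric monomials
`m_{(λ|μ)}`, with all the strict compositions `λ` occurring of length at most `k`. -/
theorem statement11 (K : Type*) [Field K] (f : MvPowerSeries ℕ K) (k : ℕ)
    (hbd : ∃ D : ℕ, ∀ d : ℕ →₀ ℕ,
      MvPowerSeries.coeff d f ≠ 0 → (d.sum fun _ n => n) ≤ D)
    (hsym : ∀ i : ℕ, k ≤ i → ∀ d : ℕ →₀ ℕ,
      MvPowerSeries.coeff (Finsupp.equivMapDomain (Equiv.swap i (i + 1)) d) f =
        MvPowerSeries.coeff d f) :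
    f ∈ Submodule.span K
      { g : MvPowerSeries ℕ K | ∃ (lam : StrictComp) (mu : PartitionL),
          lam.1.length ≤ k ∧ g = asm K lam.1 mu.1 } := by
  obtain ⟨D, hD⟩ := hbd
  have hfin : {x | ∃ d, coeff d f ≠ 0 ∧ headTail k d = x}.Finite :=
    (finite_headTail_of_degree_le k D).subset fun _ ⟨d, hd, hx⟩ => ⟨d, hD d hd, hx⟩
  refine Submodule.span_le.mpr ?_
    (mem_span_headTailIndicator f k (factorsThrough_headTail hsym) hfin)
  rintro _ ⟨d, rfl⟩
  exact headTailIndicator_mem_asmSpan k (by simp [expHead]) zero_notMem_expTail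

end
end

section
/- Let k ≥ 2 and let i be an index with i+1 < k (0-based indexing of the variables x_0,…,x_{k−1}). Let λ : Fin k → ℕ, set s_iλ := λ ∘ swap(i, i+1), and suppose g ∈ MvPolynomial (Fin k) K satisfies (x_i − x_{i+1})·g = x_i·(x^λ − x^{s_iλ}). Define F := t⁻¹·(x^{s_iλ} + (1−t)·g − (1−t)·x^λ) (this is T_i⁻¹x^λ). Then for every μ : Fin k → ℕ such that the coefficient of x^μ in F is nonzero, one has: μ_{i+1} = 0 if and only if μ = s_iλ and λ_i = 0. -/
/-!
STATEMENT 12.  Work over `K = ℚ(t)`, realized as `RatFunc ℚ` with `t = RatFunc.X`, in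
`MvPolynomial (Fin k) K` with (0-based) variables `x_0, …, x_{k−1}`.  For `λ : Fin k → ℕ`,
the monomial `x^λ` is `monomial (equivFunOnFinite.symm λ) 1`.
-/

noncomputable section

abbrev Kt : Type := RatFunc ℚ

/-- The variable `t` of `K = ℚ(t)`. -/
def tvar : Kt := RatFunc.X

/-- The monomial `x^λ`. -/
def xpow {k : ℕ} (lam : Fin k → ℕ) : MvPolynomial (Fin k) Kt :=
  MvPolynomial.monomial (Finsupp.equivFunOnFinite.symm lam) 1

namespace Aux12

open MvPolynomial Finset

variable {k : ℕ}

def muf (i' j' : Fin k) (ν : Fin k → ℕ) (c d : ℕ) : Fin k → ℕ :=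
  fun x => if x = i' then c else if x = j' then d else ν x

lemma coeff_xpow (μ f : Fin k → ℕ) :
    MvPolynomial.coeff (Finsupp.equivFunOnFinite.symm μ) (xpow f) = if f = μ then 1 else 0 := by
  rw [xpow, coeff_monomial]
  exact if_congr Finsupp.equivFunOnFinite.symm.injective.eq_iff rfl rfl

lemma X_mul_xpow (s : Fin k) (f : Fin k → ℕ) :
    X s * xpow f = xpow (fun x => if x = s then f x + 1 else f x) := by
  rw [xpow, xpow, X, monomial_mul, one_mul]
  refine congrArg (fun d => MvPolynomial.monomial d (1 : Kt)) ?_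
  ext x
  by_cases hx : x = s
  · simp [hx, add_comm]
  · simp [hx, Finsupp.single_apply, Ne.symm hx]

lemma X_mul_xpow_muf_left (i' j' : Fin k) (ν : Fin k → ℕ) (c d : ℕ) :
    X i' * xpow (muf i' j' ν c d) = xpow (muf i' j' ν (c + 1) d) := by
  rw [X_mul_xpow]
  congr 1; funext x
  by_cases hx : x = i' <;> simp [muf, hx]

lemma X_mul_xpow_muf_right (i' j' : Fin k) (h : j' ≠ i') (ν : Fin k → ℕ) (c d : ℕ) :
    X j' * xpow (muf i' j' ν c d) = xpow (muf i' j' ν c (d + 1)) := by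
  rw [X_mul_xpow]
  congr 1; funext x
  by_cases hx : x = j' <;> simp [muf, hx, h]

lemma key (i' j' : Fin k) (h : j' ≠ i') (ν : Fin k → ℕ) (a b : ℕ) (hab : b < a) :
    (X i' - X j' : MvPolynomial (Fin k) Kt) *
      ∑ j ∈ Finset.range (a - b), xpow (muf i' j' ν (b + 1 + j) (a - 1 - j)) =
    X i' * xpow (muf i' j' ν a b) - X i' * xpow (muf i' j' ν b a) := by
  have step : ∀ j ∈ Finset.range (a - b),
      X i' * xpow (muf i' j' ν (b + 1 + j) (a - 1 - j))
        - X j' * xpow (muf i' j' ν (b + 1 + j) (a - 1 - j))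
      = (fun m => xpow (muf i' j' ν (b + 1 + m) (a - m))) (j + 1)
        - (fun m => xpow (muf i' j' ν (b + 1 + m) (a - m))) j := by
    intro j hj
    rw [Finset.mem_range] at hj
    have e3 : a - 1 - j + 1 = a - j := by omega
    have e1 : b + 1 + j + 1 = b + 1 + (j + 1) := by omega
    have e2 : a - 1 - j = a - (j + 1) := by omega
    rw [X_mul_xpow_muf_left, X_mul_xpow_muf_right i' j' h, e3, e1, e2]
  have tel := Finset.sum_range_sub (f := fun m => xpow (muf i' j' ν (b + 1 + m) (a - m)))
    (n := a - b)
  rw [sub_mul, Finset.mul_sum, Finset.mul_sum, ← Finset.sum_sub_distrib,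
    Finset.sum_congr rfl step, tel, X_mul_xpow_muf_left, X_mul_xpow_muf_left,
    show b + 1 + (a - b) = a + 1 by omega, show a - (a - b) = b by omega,
    show b + 1 + 0 = b + 1 by omega, show a - 0 = a by omega]

lemma main_aux {k : ℕ} (i' j' : Fin k) (hji : j' ≠ i')
    (lam slam : Fin k → ℕ) (hslam : slam = lam ∘ (Equiv.swap i' j'))
    (g : MvPolynomial (Fin k) Kt)
    (hg : (X i' - X j') * g = X i' * (xpow lam - xpow slam))
    (F : MvPolynomial (Fin k) Kt)
    (hF : F = C tvar⁻¹ * (xpow slam + C (1 - tvar) * g - C (1 - tvar) * xpow lam))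
    (μ : Fin k → ℕ)
    (hμ : MvPolynomial.coeff (Finsupp.equivFunOnFinite.symm μ) F ≠ 0) :
    μ j' = 0 ↔ (μ = slam ∧ lam i' = 0) := by
  have hslam2 : slam = muf i' j' lam (lam j') (lam i') := by
    funext x
    rw [hslam]
    simp only [Function.comp_apply, muf]
    rcases eq_or_ne x i' with h1 | h1
    · rw [h1, Equiv.swap_apply_left, if_pos rfl]
    · rcases eq_or_ne x j' with h2 | h2
      · rw [h2, Equiv.swap_apply_right, if_neg hji, if_pos rfl]
      · rw [Equiv.swap_apply_of_ne_of_ne h1 h2, if_neg h1, if_neg h2]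
  have hlam2 : lam = muf i' j' lam (lam i') (lam j') := by
    funext x
    simp only [muf]
    rcases eq_or_ne x i' with h1 | h1
    · rw [h1, if_pos rfl]
    · rcases eq_or_ne x j' with h2 | h2
      · rw [h2, if_neg hji, if_pos rfl]
      · rw [if_neg h1, if_neg h2]
  have hxs : xpow slam = xpow (muf i' j' lam (lam j') (lam i')) := by rw [← hslam2]
  have hxl : xpow lam = xpow (muf i' j' lam (lam i') (lam j')) := by rw [← hlam2]
  have hXne : (X i' - X j' : MvPolynomial (Fin k) Kt) ≠ 0 :=
    sub_ne_zero.mpr (fun hXX => hji (MvPolynomial.X_injective hXX).symm)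
  have hz_of : slam j' = lam i' := by
    rw [hslam2]; simp [muf, hji]
  constructor
  · intro hz
    rcases lt_trichotomy (lam j') (lam i') with hab | hab | hab
    · -- b < a : vacuous case
      obtain ⟨n, hn⟩ : ∃ n, lam i' - lam j' = n + 1 := ⟨lam i' - lam j' - 1, by omega⟩
      have hgG : g = ∑ j ∈ Finset.range (lam i' - lam j'),
          xpow (muf i' j' lam (lam j' + 1 + j) (lam i' - 1 - j)) := by
        apply mul_left_cancel₀ hXne
        rw [hg, key i' j' hji lam (lam i') (lam j') hab, hxl, hxs, mul_sub]
      have hsplit : (∑ j ∈ Finset.range (lam i' - lam j'),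
            xpow (muf i' j' lam (lam j' + 1 + j) (lam i' - 1 - j)))
          = (∑ j ∈ Finset.range n,
              xpow (muf i' j' lam (lam j' + 1 + j) (lam i' - 1 - j))) + xpow lam := by
        rw [hn, Finset.sum_range_succ, show lam j' + 1 + n = lam i' by omega,
          show lam i' - 1 - n = lam j' by omega, ← hlam2]
      have hF' : F = C tvar⁻¹ * xpow (muf i' j' lam (lam j') (lam i'))
          + C (tvar⁻¹ * (1 - tvar)) * ∑ j ∈ Finset.range n,
              xpow (muf i' j' lam (lam j' + 1 + j) (lam i' - 1 - j)) := by
        rw [hF, hgG, hsplit, hxs, map_mul]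
        ring
      have hmem : μ = muf i' j' lam (lam j') (lam i') ∨
          ∃ j ∈ Finset.range n, μ = muf i' j' lam (lam j' + 1 + j) (lam i' - 1 - j) := by
        by_contra hc
        push_neg at hc
        apply hμ
        have hzero : ∀ j ∈ Finset.range n,
            MvPolynomial.coeff (Finsupp.equivFunOnFinite.symm μ)
              (xpow (muf i' j' lam (lam j' + 1 + j) (lam i' - 1 - j))) = 0 := by
          intro j hj
          rw [coeff_xpow, if_neg (fun hh => hc.2 j hj hh.symm)]
        rw [hF', coeff_add, coeff_C_mul, coeff_C_mul, MvPolynomial.coeff_sum,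
          coeff_xpow, if_neg (fun hh => hc.1 hh.symm), Finset.sum_eq_zero hzero,
          mul_zero, mul_zero, add_zero]
      rcases hmem with hmem | ⟨j, hj, hmem⟩
      · have h1 := congrFun hmem j'
        simp [muf, hji] at h1
        omega
      · have h1 := congrFun hmem j'
        simp [muf, hji] at h1
        rw [Finset.mem_range] at hj
        omega
    · -- b = a
      have hsl : slam = lam := by
        rw [hslam2]
        conv_rhs => rw [hlam2]
        rw [hab]
      have hg0 : g = 0 := by
        have h1 := hg
        rw [hsl, sub_self, mul_zero] at h1
        exact (mul_eq_zero.mp h1).resolve_left hXne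
      have hmem : μ = lam := by
        by_contra hc
        apply hμ
        rw [hF, hg0, hsl, mul_zero, add_zero, coeff_C_mul, coeff_sub, coeff_C_mul,
          coeff_xpow, if_neg (fun hh => hc hh.symm)]
        simp
      refine ⟨hmem.trans hsl.symm, ?_⟩
      have : μ j' = lam j' := by rw [hmem]
      omega
    · -- a < b
      have hgG : g = -∑ j ∈ Finset.range (lam j' - lam i'),
          xpow (muf i' j' lam (lam i' + 1 + j) (lam j' - 1 - j)) := by
        apply mul_left_cancel₀ hXne
        rw [hg, mul_neg, key i' j' hji lam (lam j') (lam i') hab, hxl, hxs]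
        ring
      have hF' : F = C tvar⁻¹ * xpow (muf i' j' lam (lam j') (lam i'))
          - C (tvar⁻¹ * (1 - tvar)) * ∑ j ∈ Finset.range (lam j' - lam i'),
              xpow (muf i' j' lam (lam i' + 1 + j) (lam j' - 1 - j))
          - C (tvar⁻¹ * (1 - tvar)) * xpow (muf i' j' lam (lam i') (lam j')) := by
        rw [hF, hgG, hxs, hxl, map_mul]
        ring
      have hmem : μ = muf i' j' lam (lam j') (lam i') ∨
          μ = muf i' j' lam (lam i') (lam j') ∨
          ∃ j ∈ Finset.range (lam j' - lam i'),
            μ = muf i' j' lam (lam i' + 1 + j) (lam j' - 1 - j) := by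
        by_contra hc
        push_neg at hc
        apply hμ
        have hzero : ∀ j ∈ Finset.range (lam j' - lam i'),
            MvPolynomial.coeff (Finsupp.equivFunOnFinite.symm μ)
              (xpow (muf i' j' lam (lam i' + 1 + j) (lam j' - 1 - j))) = 0 := by
          intro j hj
          rw [coeff_xpow, if_neg (fun hh => hc.2.2 j hj hh.symm)]
        rw [hF', coeff_sub, coeff_sub, coeff_C_mul, coeff_C_mul, coeff_C_mul,
          MvPolynomial.coeff_sum, coeff_xpow, coeff_xpow,
          if_neg (fun hh => hc.1 hh.symm), if_neg (fun hh => hc.2.1 hh.symm),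
          Finset.sum_eq_zero hzero]
        ring
      rcases hmem with hmem | hmem | ⟨j, hj, hmem⟩
      · have h1 := congrFun hmem j'
        simp [muf, hji] at h1
        exact ⟨hmem.trans hslam2.symm, by omega⟩
      · have h1 := congrFun hmem j'
        simp [muf, hji] at h1
        omega
      · have h1 := congrFun hmem j'
        simp [muf, hji] at h1
        rw [Finset.mem_range] at hj
        have ha0 : lam i' = 0 := by omega
        refine ⟨?_, ha0⟩
        rw [hmem, show lam i' + 1 + j = lam j' by omega,
          show lam j' - 1 - j = lam i' by omega, ← hslam2]
  · rintro ⟨h1, h2⟩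
    rw [h1]
    exact hz_of.trans h2

end Aux12

/-- Let `k ≥ 2`, `i + 1 < k`, `λ : Fin k → ℕ`, `s_iλ := λ ∘ swap(i, i+1)`, and suppose
`(x_i − x_{i+1})·g = x_i·(x^λ − x^{s_iλ})`.  Define
`F := t⁻¹·(x^{s_iλ} + (1−t)·g − (1−t)·x^λ)` (this is `T_i⁻¹ x^λ`).  Then for every
`μ : Fin k → ℕ` whose monomial `x^μ` has nonzero coefficient in `F`:
`μ_{i+1} = 0` if and only if `μ = s_iλ` and `λ_i = 0`. -/
theorem statement12 (k : ℕ) (hk : 2 ≤ k) (i : ℕ) (hik : i + 1 < k)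
    (lam slam : Fin k → ℕ)
    (hslam : slam = lam ∘ (Equiv.swap (⟨i, by omega⟩ : Fin k) ⟨i + 1, hik⟩))
    (g : MvPolynomial (Fin k) Kt)
    (hg : (MvPolynomial.X (⟨i, by omega⟩ : Fin k) - MvPolynomial.X ⟨i + 1, hik⟩) * g =
      MvPolynomial.X (⟨i, by omega⟩ : Fin k) * (xpow lam - xpow slam))
    (F : MvPolynomial (Fin k) Kt)
    (hF : F = MvPolynomial.C tvar⁻¹ *
      (xpow slam + MvPolynomial.C (1 - tvar) * g - MvPolynomial.C (1 - tvar) * xpow lam)) :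
    ∀ μ : Fin k → ℕ,
      MvPolynomial.coeff (Finsupp.equivFunOnFinite.symm μ) F ≠ 0 →
        (μ ⟨i + 1, hik⟩ = 0 ↔ (μ = slam ∧ lam ⟨i, by omega⟩ = 0)) := by
  intro μ hμ
  exact Aux12.main_aux (⟨i, by omega⟩ : Fin k) ⟨i + 1, hik⟩
    (by simp [Fin.ext_iff]) lam slam hslam g hg F hF μ hμ

end
end
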